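/- arXiv:1908.01569 — 2 statements merged into one kernel-verified Lean document; each statement's English description precedes it below -/
import Mathlib

section
/- In the structure setting: if (t₁,t₂) ⊆ Ω, then the restriction of τ to (t₁,t₂) follows a great circle in S^{n−1} through λ with constant speed k, i.e. τ((t₁,t₂)) is contained in the intersection of S^{n−1} with a two-dimensional linear subspace containing λ and |τ'| ≡ k on (t₁,t₂). Furthermore, if (t₁,t₂) is a connected component of Ω, then there exists t₀ ∈ (t₁,t₂) with τ(t₀) = λ or τ(t₀) = −λ. -/
open MeasureTheory Set Filter
open scoped RealInnerProductSpace ENNReal Topology NNReal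

noncomputable section

abbrev E (n : ℕ) : Type := EuclideanSpace ℝ (Fin n)

/-- Orthogonal projection of `ℝⁿ` onto the orthogonal complement of `span {V, W}`. -/
def projPerp {n : ℕ} (V W x : E n) : E n :=
  (Submodule.orthogonalProjectionOnto ((Submodule.span ℝ {V, W})ᗮ) x : E n)

/-- `τ ∈ W^{1,∞}((0,L); S^{n-1})`, represented by `τ` (Lipschitz on `[0,L]`)
together with its a.e. derivative `τ'`. -/
def IsW1InftySphere (n : ℕ) (L : ℝ) (τ τ' : ℝ → E n) : Prop :=
  (∃ C : ℝ≥0, LipschitzOnWith C τ (Icc 0 L)) ∧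
  (∀ᵐ t ∂(volume.restrict (Ioo (0:ℝ) L)), HasDerivAt τ (τ' t) t) ∧
  (∀ t ∈ Icc (0:ℝ) L, ‖τ t‖ = 1)

/-- `f ∈ W^{1,∞}(0,L)`, represented by `f` (Lipschitz on `[0,L]`) together with
its a.e. derivative `f'`. -/
def IsW1InftyR (L : ℝ) (f f' : ℝ → ℝ) : Prop :=
  (∃ C : ℝ≥0, LipschitzOnWith C f (Icc 0 L)) ∧
  (∀ᵐ t ∂(volume.restrict (Ioo (0:ℝ) L)), HasDerivAt f (f' t) t)

/-- `K_∞(τ) = esssup_{(0,L)} |τ'|`. -/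
def Kinf (n : ℕ) (L : ℝ) (τ' : ℝ → E n) : ℝ :=
  essSup (fun t => ‖τ' t‖) (volume.restrict (Ioo (0:ℝ) L))

/-- The equation `f(τ'' + k²τ) = β k² proj⊥_{τ,τ'}(λ)` holds weakly in `(0,L)`. -/
def WeakFEq1 (n : ℕ) (L k : ℝ) (β : ℝ → ℝ) (lam : E n)
    (τ τ' : ℝ → E n) (f f' : ℝ → ℝ) : Prop :=
  ∀ ξ : ℝ → E n, ContDiff ℝ (⊤ : ℕ∞) ξ → tsupport ξ ⊆ Ioo 0 L →
    ∫ t in Ioo (0:ℝ) L,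
      (f t * ⟪τ' t, deriv ξ t⟫ + f' t * ⟪τ' t, ξ t⟫
        - f t * k ^ 2 * ⟪τ t, ξ t⟫
        + β t * k ^ 2 * ⟪projPerp (τ t) (τ' t) lam, ξ t⟫) = 0

/-- The equation `f' = β λ·τ'` holds weakly in `(0,L)`. -/
def WeakFEq2 (n : ℕ) (L : ℝ) (β : ℝ → ℝ) (lam : E n)
    (τ' : ℝ → E n) (f' : ℝ → ℝ) : Prop :=
  ∀ᵐ t ∂(volume.restrict (Ioo (0:ℝ) L)), f' t = β t * ⟪lam, τ' t⟫

/-- Bundle of structural hypotheses on an open interval. -/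
structure GC (n : ℕ) (τ τ' : ℝ → E n) (lam : E n) (k a b : ℝ) : Prop where
  hk : 0 < k
  hlam : ‖lam‖ = 1
  hd : ∀ t ∈ Ioo a b, HasDerivAt τ (τ' t) t
  hτ1 : ∀ t ∈ Ioo a b, ‖τ t‖ = 1
  hτ'k : ∀ t ∈ Ioo a b, ‖τ' t‖ = k
  hcont : ContinuousOn τ' (Ioo a b)
  hdep : ∀ t ∈ Ioo a b, ¬ LinearIndependent ℝ ![τ t, τ' t, lam]

namespace GC

variable {n : ℕ} {τ τ' : ℝ → E n} {lam : E n} {k a b : ℝ}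

lemma mono (h : GC n τ τ' lam k a b) {a' b' : ℝ} (hsub : Ioo a' b' ⊆ Ioo a b) :
    GC n τ τ' lam k a' b' :=
  ⟨h.hk, h.hlam, fun t ht => h.hd t (hsub ht), fun t ht => h.hτ1 t (hsub ht),
    fun t ht => h.hτ'k t (hsub ht), (h.hcont.mono hsub), fun t ht => h.hdep t (hsub ht)⟩

lemma orth (h : GC n τ τ' lam k a b) {t : ℝ} (ht : t ∈ Ioo a b) : ⟪τ t, τ' t⟫ = 0 := by
  have h1 : HasDerivAt (fun y => ⟪τ y, τ y⟫) (⟪τ t, τ' t⟫ + ⟪τ' t, τ t⟫) t :=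
    (h.hd t ht).inner ℝ (h.hd t ht)
  have h2 : HasDerivAt (fun y => ⟪τ y, τ y⟫) 0 t := by
    have : (fun _ : ℝ => (1 : ℝ)) =ᶠ[𝓝 t] fun y => ⟪τ y, τ y⟫ := by
      filter_upwards [Ioo_mem_nhds ht.1 ht.2] with y hy
      rw [real_inner_self_eq_norm_sq, h.hτ1 y hy]; norm_num
    exact (hasDerivAt_const t (1:ℝ)).congr_of_eventuallyEq this.symm
  have h3 := h1.unique h2
  have h4 := real_inner_comm (τ t) (τ' t)
  linarith

lemma decomp (h : GC n τ τ' lam k a b) {t : ℝ} (ht : t ∈ Ioo a b) :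
    lam = ⟪lam, τ t⟫ • τ t + (⟪lam, τ' t⟫ / k ^ 2) • τ' t := by
  obtain ⟨c, hsum, i, hi⟩ := Fintype.not_linearIndependent_iff.1 (h.hdep t ht)
  rw [Fin.sum_univ_three] at hsum
  simp only [Matrix.cons_val_zero, Matrix.cons_val_one, Matrix.head_cons,
    Matrix.cons_val_two, Matrix.tail_cons] at hsum
  have hττ : ⟪τ t, τ t⟫ = 1 := by
    rw [real_inner_self_eq_norm_sq, h.hτ1 t ht]; norm_num
  have hτ'τ' : ⟪τ' t, τ' t⟫ = k ^ 2 := by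
    rw [real_inner_self_eq_norm_sq, h.hτ'k t ht]
  have horth := h.orth ht
  have horth' : ⟪τ' t, τ t⟫ = 0 := by rw [real_inner_comm]; exact horth
  have hcomm1 := real_inner_comm (τ t) lam
  have hcomm2 := real_inner_comm (τ' t) lam
  have e1 : c 0 * ⟪τ t, τ t⟫ + c 1 * ⟪τ' t, τ t⟫ + c 2 * ⟪lam, τ t⟫ = 0 := by
    have := congrArg (fun v : E n => ⟪v, τ t⟫) hsum
    simp only [inner_add_left, real_inner_smul_left, inner_zero_left] at this
    exact this
  have e2 : c 0 * ⟪τ t, τ' t⟫ + c 1 * ⟪τ' t, τ' t⟫ + c 2 * ⟪lam, τ' t⟫ = 0 := by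
    have := congrArg (fun v : E n => ⟪v, τ' t⟫) hsum
    simp only [inner_add_left, real_inner_smul_left, inner_zero_left] at this
    exact this
  rw [hττ, horth'] at e1
  rw [horth, hτ'τ'] at e2
  set g : ℝ := ⟪lam, τ t⟫ with hgdef
  set g' : ℝ := ⟪lam, τ' t⟫ with hg'def
  have hk2 : (k:ℝ) ^ 2 ≠ 0 := pow_ne_zero _ (ne_of_gt h.hk)
  have hc2 : c 2 ≠ 0 := by
    intro h2
    have hc0 : c 0 = 0 := by rw [h2] at e1; linarith
    have hc1 : c 1 = 0 := by
      rw [h2] at e2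
      have : c 1 * k ^ 2 = 0 := by linarith
      exact (mul_eq_zero.1 this).resolve_right hk2
    fin_cases i <;> simp_all
  have hc0 : c 0 = -(c 2 * g) := by linarith
  have hc1 : c 1 = -(c 2 * (g' / k ^ 2)) := by
    have hc1' : c 1 = -(c 2 * g') / k ^ 2 := by rw [eq_div_iff hk2]; linarith
    rw [hc1']; ring
  apply smul_right_injective (E n) hc2
  rw [hc0, hc1] at hsum
  linear_combination (norm := module) hsum

lemma pyth (h : GC n τ τ' lam k a b) {t : ℝ} (ht : t ∈ Ioo a b) :
    ⟪lam, τ t⟫ ^ 2 + ⟪lam, τ' t⟫ ^ 2 / k ^ 2 = 1 := by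
  have hd := h.decomp ht
  have h1 : ⟪lam, lam⟫ = 1 := by
    rw [real_inner_self_eq_norm_sq, h.hlam]; norm_num
  have h2 : ⟪lam, ⟪lam, τ t⟫ • τ t + (⟪lam, τ' t⟫ / k ^ 2) • τ' t⟫ = 1 := by
    rw [← hd]; exact h1
  rw [inner_add_right, real_inner_smul_right, real_inner_smul_right] at h2
  have hk2 : (k:ℝ) ^ 2 ≠ 0 := pow_ne_zero _ (ne_of_gt h.hk)
  set g : ℝ := ⟪lam, τ t⟫ with hgdef
  set g' : ℝ := ⟪lam, τ' t⟫ with hg'def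
  field_simp at h2 ⊢
  nlinarith [h2]

end GC

namespace GC
variable {n : ℕ} {τ τ' : ℝ → E n} {lam : E n} {k a b : ℝ}

lemma g_sq_le (h : GC n τ τ' lam k a b) {t : ℝ} (ht : t ∈ Ioo a b) :
    ⟪lam, τ t⟫ ^ 2 ≤ 1 := by
  have hp := h.pyth ht
  have h1 : 0 ≤ ⟪lam, τ' t⟫ ^ 2 / k ^ 2 := by positivity
  linarith

lemma deg_iff (h : GC n τ τ' lam k a b) {t : ℝ} (ht : t ∈ Ioo a b) :
    ⟪lam, τ' t⟫ = 0 ↔ (τ t = lam ∨ τ t = -lam) := by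
  constructor
  · intro h0
    have hp := h.pyth ht
    rw [h0] at hp
    have hg2 : (⟪lam, τ t⟫ - 1) * (⟪lam, τ t⟫ + 1) = 0 := by
      have : (0:ℝ) ^ 2 / k ^ 2 = 0 := by simp
      rw [this] at hp; nlinarith
    rcases mul_eq_zero.1 hg2 with h1 | h1
    · left
      have : ⟪lam, τ t⟫ = 1 := by linarith
      exact ((inner_eq_one_iff_of_norm_eq_one h.hlam (h.hτ1 t ht)).1 this).symm
    · right
      have : ⟪lam, -τ t⟫ = 1 := by rw [inner_neg_right]; linarith
      have h2 : ‖-τ t‖ = 1 := by rw [norm_neg]; exact h.hτ1 t ht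
      have h3 := (inner_eq_one_iff_of_norm_eq_one h.hlam h2).1 this
      rw [h3, neg_neg]
  · rintro (h1 | h1)
    · have := h.orth ht
      rw [h1] at this
      exact this
    · have := h.orth ht
      rw [h1, inner_neg_left] at this
      linarith

lemma gron (h : GC n τ τ' lam k a b) (X : Submodule ℝ (E n)) (hXlam : lam ∈ X)
    {s δ : ℝ} (hδ : 0 < δ) (hIcc : Icc (s - δ) (s + δ) ⊆ Ioo a b)
    (hg' : ∀ y ∈ Icc (s - δ) (s + δ), ⟪lam, τ' y⟫ ≠ 0)
    (hbase : τ s ∈ X) :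
    ∀ y ∈ Icc (s - δ) (s + δ), τ y ∈ X ∧ τ' y ∈ X := by
  have hsmem : s ∈ Icc (s - δ) (s + δ) := ⟨by linarith, by linarith⟩
  have hk2 : (k:ℝ) ^ 2 ≠ 0 := pow_ne_zero _ (ne_of_gt h.hk)
  set Q : E n →L[ℝ] E n := (Xᗮ).subtypeL.comp (Submodule.orthogonalProjectionOnto Xᗮ) with hQdef
  have hQ0 : ∀ x : E n, Q x = 0 ↔ x ∈ X := by
    intro x
    rw [hQdef]
    simp only [ContinuousLinearMap.comp_apply, Submodule.subtypeL_apply,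
      Submodule.coe_eq_zero, Submodule.orthogonalProjectionOnto_eq_zero_iff,
      Submodule.orthogonal_orthogonal]
  have hQlam : Q lam = 0 := (hQ0 lam).2 hXlam
  set u : ℝ → E n := fun y => Q (τ y) with hu
  have hud : ∀ y ∈ Icc (s - δ) (s + δ), HasDerivAt u (Q (τ' y)) y := fun y hy =>
    (Q.hasFDerivAt).comp_hasDerivAt y (h.hd y (hIcc hy))
  set c : ℝ → ℝ := fun y => -(k ^ 2 * ⟪lam, τ y⟫ / ⟪lam, τ' y⟫) with hc
  have hrel : ∀ y ∈ Icc (s - δ) (s + δ), Q (τ' y) = c y • u y := by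
    intro y hy
    obtain ⟨g, hg⟩ : ∃ r : ℝ, ⟪lam, τ y⟫ = r := ⟨_, rfl⟩
    obtain ⟨g', hgp⟩ : ∃ r : ℝ, ⟪lam, τ' y⟫ = r := ⟨_, rfl⟩
    have hdc := congrArg Q (h.decomp (hIcc hy))
    simp only [map_add, ContinuousLinearMap.map_smul, hQlam, hg, hgp] at hdc
    have hg'y : g' ≠ 0 := hgp ▸ hg' y hy
    have hne : g' / k ^ 2 ≠ 0 := div_ne_zero hg'y hk2
    have hcy : c y = -(k ^ 2 * g / g') := by rw [hc]; simp only []; rw [hg, hgp]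
    apply smul_right_injective (E n) hne
    show (g' / k ^ 2) • Q (τ' y) = (g' / k ^ 2) • (c y • u y)
    rw [smul_smul, hcy]
    have hcoef : g' / k ^ 2 * -(k ^ 2 * g / g') = -g := by
      rw [mul_neg, div_mul_div_comm, mul_comm g' (k ^ 2 * g), mul_assoc, mul_div_mul_left _ _ hk2,
        mul_div_assoc, div_self hg'y, mul_one]
    rw [hcoef]
    simp only [hu]
    linear_combination (norm := module) hdc.symm
  set w : ℝ → ℝ := fun y => ⟪u y, u y⟫ with hw
  have hwd : ∀ y ∈ Icc (s - δ) (s + δ), HasDerivAt w ((2 * c y) * w y) y := by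
    intro y hy
    have hD := (hud y hy).inner ℝ (hud y hy)
    rw [hrel y hy] at hD
    refine hD.congr_deriv ?_
    rw [real_inner_smul_right, real_inner_smul_left]
    simp only [hw]
    ring
  -- bound on c
  have hg'contJ : ContinuousOn (fun y => |⟪lam, τ' y⟫|) (Icc (s - δ) (s + δ)) := by
    have : ContinuousOn (fun y => ⟪lam, τ' y⟫) (Icc (s - δ) (s + δ)) :=
      continuousOn_const.inner (h.hcont.mono (fun x hx => hIcc hx))
    exact this.abs
  obtain ⟨y₀, hy₀J, hy₀min⟩ := isCompact_Icc.exists_isMinOn ⟨s, hsmem⟩ hg'contJ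
  set η : ℝ := |⟪lam, τ' y₀⟫| with hη
  have hηpos : 0 < η := abs_pos.2 (hg' y₀ hy₀J)
  set M : ℝ := k ^ 2 / η with hM
  have hMpos : 0 < M := by positivity
  have hcM : ∀ y ∈ Icc (s - δ) (s + δ), |c y| ≤ M := by
    intro y hy
    rw [hc]
    rw [abs_neg, abs_div, abs_mul, abs_pow]
    have h1 : |⟪lam, τ y⟫| ≤ 1 := by
      have := h.g_sq_le (hIcc hy)
      nlinarith [abs_nonneg ⟪lam, τ y⟫, sq_abs ⟪lam, τ y⟫]
    have h2 : η ≤ |⟪lam, τ' y⟫| := hy₀min hy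
    have h3 : |k| ^ 2 * |⟪lam, τ y⟫| ≤ k ^ 2 := by
      rw [sq_abs]
      nlinarith [sq_nonneg k]
    calc |k| ^ 2 * |⟪lam, τ y⟫| / |⟪lam, τ' y⟫| ≤ k ^ 2 / η := by
          apply div_le_div₀ (by positivity) h3 hηpos h2
      _ = M := rfl
  have hw0 : ∀ y, 0 ≤ w y := fun y => real_inner_self_nonneg
  have hws : w s = 0 := by
    have h0 : u s = 0 := (hQ0 _).2 hbase
    simp only [hw, h0, inner_zero_left]
  have hwz : ∀ y ∈ Icc (s - δ) (s + δ), w y = 0 := by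
    intro y hy
    rcases le_total y s with hys | hys
    · -- left of s : use monotone of w * exp (2M y)
      set A : ℝ → ℝ := fun y => w y * Real.exp (2 * M * y) with hA
      have hAd : ∀ z ∈ Icc (s - δ) (s + δ),
          HasDerivAt A ((2 * c z) * w z * Real.exp (2 * M * z)
            + w z * (Real.exp (2 * M * z) * (2 * M))) z := by
        intro z hz
        have he : HasDerivAt (fun y : ℝ => Real.exp (2 * M * y))
            (Real.exp (2 * M * z) * (2 * M)) z := by
          have : HasDerivAt (fun y : ℝ => 2 * M * y) (2 * M) z := by
            simpa using (hasDerivAt_id z).const_mul (2 * M)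
          exact this.exp
        exact (hwd z hz).mul he
      have hmono : MonotoneOn A (Icc (s - δ) s) := by
        apply monotoneOn_of_deriv_nonneg (convex_Icc _ _)
        · intro z hz
          have hz' : z ∈ Icc (s - δ) (s + δ) := ⟨hz.1, by linarith [hz.2]⟩
          exact ((hAd z hz').continuousAt).continuousWithinAt
        · intro z hz
          rw [interior_Icc] at hz
          have hz' : z ∈ Icc (s - δ) (s + δ) := ⟨le_of_lt hz.1, by linarith [hz.2]⟩
          exact ((hAd z hz').differentiableAt).differentiableWithinAt
        · intro z hz
          rw [interior_Icc] at hz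
          have hz' : z ∈ Icc (s - δ) (s + δ) := ⟨le_of_lt hz.1, by linarith [hz.2]⟩
          rw [(hAd z hz').deriv]
          have h1 := (abs_le.1 (hcM z hz')).1
          have h2 := hw0 z
          have h3 := Real.exp_pos (2 * M * z)
          have key : 0 ≤ (c z + M) * w z * Real.exp (2 * M * z) :=
            mul_nonneg (mul_nonneg (by linarith) h2) h3.le
          nlinarith [key]
      have h4 : A y ≤ A s := hmono ⟨hy.1, hys⟩ ⟨by linarith, le_refl s⟩ hys
      have h5 : A s = 0 := by simp [hA, hws]
      have h6 : 0 ≤ A y := mul_nonneg (hw0 y) (Real.exp_pos _).le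
      have h7 : A y = 0 := le_antisymm (h5 ▸ h4) h6
      have h8 := Real.exp_pos (2 * M * y)
      rw [hA] at h7
      rcases mul_eq_zero.1 h7 with h9 | h9
      · exact h9
      · exact absurd h9 (ne_of_gt h8)
    · -- right of s : use antitone of w * exp (-2M y)
      set A : ℝ → ℝ := fun y => w y * Real.exp (-(2 * M) * y) with hA
      have hAd : ∀ z ∈ Icc (s - δ) (s + δ),
          HasDerivAt A ((2 * c z) * w z * Real.exp (-(2 * M) * z)
            + w z * (Real.exp (-(2 * M) * z) * (-(2 * M)))) z := by
        intro z hz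
        have he : HasDerivAt (fun y : ℝ => Real.exp (-(2 * M) * y))
            (Real.exp (-(2 * M) * z) * (-(2 * M))) z := by
          have : HasDerivAt (fun y : ℝ => -(2 * M) * y) (-(2 * M)) z := by
            simpa using (hasDerivAt_id z).const_mul (-(2 * M))
          exact this.exp
        exact (hwd z hz).mul he
      have hmono : AntitoneOn A (Icc s (s + δ)) := by
        apply antitoneOn_of_deriv_nonpos (convex_Icc _ _)
        · intro z hz
          have hz' : z ∈ Icc (s - δ) (s + δ) := ⟨by linarith [hz.1], hz.2⟩
          exact ((hAd z hz').continuousAt).continuousWithinAt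
        · intro z hz
          rw [interior_Icc] at hz
          have hz' : z ∈ Icc (s - δ) (s + δ) := ⟨by linarith [hz.1], le_of_lt hz.2⟩
          exact ((hAd z hz').differentiableAt).differentiableWithinAt
        · intro z hz
          rw [interior_Icc] at hz
          have hz' : z ∈ Icc (s - δ) (s + δ) := ⟨by linarith [hz.1], le_of_lt hz.2⟩
          rw [(hAd z hz').deriv]
          have h1 := (abs_le.1 (hcM z hz')).2
          have h2 := hw0 z
          have h3 := Real.exp_pos (-(2 * M) * z)
          have key : 0 ≤ (M - c z) * w z * Real.exp (-(2 * M) * z) :=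
            mul_nonneg (mul_nonneg (by linarith) h2) h3.le
          nlinarith [key]
      have h4 : A y ≤ A s := hmono ⟨le_refl s, by linarith⟩ ⟨hys, hy.2⟩ hys
      have h5 : A s = 0 := by simp [hA, hws]
      have h6 : 0 ≤ A y := mul_nonneg (hw0 y) (Real.exp_pos _).le
      have h7 : A y = 0 := le_antisymm (h5 ▸ h4) h6
      have h8 := Real.exp_pos (-(2 * M) * y)
      rw [hA] at h7
      rcases mul_eq_zero.1 h7 with h9 | h9
      · exact h9
      · exact absurd h9 (ne_of_gt h8)
  intro y hy
  have hu0 : u y = 0 := by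
    have := hwz y hy
    rw [hw] at this
    exact inner_self_eq_zero.1 this
  constructor
  · exact (hQ0 _).1 hu0
  · have := hrel y hy
    rw [hu0, smul_zero] at this
    exact (hQ0 _).1 this

end GC

/-- A nonempty subset of an open interval that is "open and closed" in the interval
in the metric sense equals the whole interval. -/
lemma clopen_Ioo_eq {a b : ℝ} {T : Set ℝ} (hT : T ⊆ Ioo a b) (hne : T.Nonempty)
    (hopen : ∀ s ∈ T, ∃ δ > 0, Ioo (s - δ) (s + δ) ∩ Ioo a b ⊆ T)
    (hcl : ∀ s ∈ Ioo a b, s ∉ T → ∃ δ > 0, Ioo (s - δ) (s + δ) ∩ T = ∅) :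
    T = Ioo a b := by
  classical
  choose! δo hδo hsubo using hopen
  choose! δc hδc hsubc using hcl
  set U : Set ℝ := ⋃ (s : ℝ) (_ : s ∈ T), Ioo (s - δo s) (s + δo s) with hU
  set V : Set ℝ := ⋃ (s : ℝ) (_ : s ∈ Ioo a b \ T), Ioo (s - δc s) (s + δc s) with hV
  have hUopen : IsOpen U := isOpen_iUnion fun s => isOpen_iUnion fun _ => isOpen_Ioo
  have hVopen : IsOpen V := isOpen_iUnion fun s => isOpen_iUnion fun _ => isOpen_Ioo
  have hcover : Ioo a b ⊆ U ∪ V := by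
    intro x hx
    by_cases hxT : x ∈ T
    · left
      refine mem_iUnion.2 ⟨x, mem_iUnion.2 ⟨hxT, ?_⟩⟩
      have := hδo x hxT
      simp only [mem_Ioo]; constructor <;> linarith
    · right
      refine mem_iUnion.2 ⟨x, mem_iUnion.2 ⟨⟨hx, hxT⟩, ?_⟩⟩
      have := hδc x hx hxT
      simp only [mem_Ioo]; constructor <;> linarith
  have hUT : U ∩ Ioo a b ⊆ T := by
    rintro x ⟨hxU, hxI⟩
    obtain ⟨s, hs⟩ := mem_iUnion.1 hxU
    obtain ⟨hsT, hxs⟩ := mem_iUnion.1 hs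
    exact hsubo s hsT ⟨hxs, hxI⟩
  have hVT : V ∩ T = ∅ := by
    ext x
    simp only [mem_inter_iff, mem_empty_iff_false, iff_false, not_and]
    intro hxV hxT
    obtain ⟨s, hs⟩ := mem_iUnion.1 hxV
    obtain ⟨hsI, hxs⟩ := mem_iUnion.1 hs
    have : x ∈ Ioo (s - δc s) (s + δc s) ∩ T := ⟨hxs, hxT⟩
    rw [hsubc s hsI.1 hsI.2] at this
    exact this
  have hpre := isPreconnected_Ioo (a := a) (b := b)
  by_contra hne2
  have hVne : (Ioo a b ∩ V).Nonempty := by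
    have hTsub : T ⊂ Ioo a b := ssubset_of_subset_of_ne hT (by exact fun h => hne2 h)
    obtain ⟨x, hxI, hxT⟩ := exists_of_ssubset hTsub
    refine ⟨x, hxI, ?_⟩
    rcases hcover hxI with h1 | h1
    · exact absurd (hUT ⟨h1, hxI⟩) hxT
    · exact h1
  have hUne : (Ioo a b ∩ U).Nonempty := by
    obtain ⟨x, hxT⟩ := hne
    refine ⟨x, hT hxT, ?_⟩
    refine mem_iUnion.2 ⟨x, mem_iUnion.2 ⟨hxT, ?_⟩⟩
    have := hδo x hxT
    simp only [mem_Ioo]; constructor <;> linarith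
  obtain ⟨x, hxI, hxU, hxV⟩ := hpre U V hUopen hVopen hcover hUne hVne
  have hxT : x ∈ T := hUT ⟨hxU, hxI⟩
  have : x ∈ V ∩ T := ⟨hxV, hxT⟩
  rw [hVT] at this
  exact this

namespace GC
variable {n : ℕ} {τ τ' : ℝ → E n} {lam : E n} {k a b : ℝ}

/-- Propagation along a nondegenerate interval. -/
lemma core (h : GC n τ τ' lam k a b)
    (hnd : ∀ t ∈ Ioo a b, ⟪lam, τ' t⟫ ≠ 0)
    (X : Submodule ℝ (E n)) (hXlam : lam ∈ X)
    {c : ℝ} (hc : c ∈ Ioo a b) (hbase : τ c ∈ X) :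
    ∀ t ∈ Ioo a b, τ t ∈ X ∧ τ' t ∈ X := by
  have hXclosed : IsClosed (X : Set (E n)) := Submodule.closed_of_finiteDimensional X
  set T : Set ℝ := {t ∈ Ioo a b | τ t ∈ X} with hT
  have hTsub : T ⊆ Ioo a b := fun t ht => ht.1
  have hTne : T.Nonempty := ⟨c, hc, hbase⟩
  have hTopen : ∀ s ∈ T, ∃ δ > 0, Ioo (s - δ) (s + δ) ∩ Ioo a b ⊆ T := by
    rintro s ⟨hsI, hsX⟩
    set δ : ℝ := min (s - a) (b - s) / 2 with hδdef
    have hδpos : 0 < δ := by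
      have := hsI.1; have := hsI.2
      apply div_pos (lt_min (by linarith) (by linarith)) (by norm_num)
    have hsubI : Icc (s - δ) (s + δ) ⊆ Ioo a b := by
      intro x hx
      have h1 : δ ≤ (s - a) / 2 := by
        rw [hδdef]; exact div_le_div_of_nonneg_right (min_le_left _ _) (by norm_num)
      have h2 : δ ≤ (b - s) / 2 := by
        rw [hδdef]; exact div_le_div_of_nonneg_right (min_le_right _ _) (by norm_num)
      have := hsI.1; have := hsI.2
      exact ⟨by linarith [hx.1], by linarith [hx.2]⟩
    have hpr := h.gron X hXlam hδpos hsubI (fun y hy => hnd y (hsubI hy)) hsX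
    exact ⟨δ, hδpos, fun x hx => ⟨hx.2, (hpr x ⟨le_of_lt hx.1.1, le_of_lt hx.1.2⟩).1⟩⟩
  have hTcl : ∀ s ∈ Ioo a b, s ∉ T → ∃ δ > 0, Ioo (s - δ) (s + δ) ∩ T = ∅ := by
    intro s hsI hsT
    have hτX : τ s ∉ X := fun hmem => hsT ⟨hsI, hmem⟩
    have hcont : ContinuousAt τ s := (h.hd s hsI).continuousAt
    have : ∀ᶠ x in 𝓝 s, τ x ∉ X := by
      have : IsOpen ((X : Set (E n))ᶜ) := hXclosed.isOpen_compl
      exact hcont.eventually_mem (this.mem_nhds hτX)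
    obtain ⟨δ, hδpos, hδ⟩ := Metric.eventually_nhds_iff_ball.1 this
    refine ⟨δ, hδpos, ?_⟩
    ext x
    simp only [mem_inter_iff, mem_empty_iff_false, iff_false, not_and]
    intro hx hxT
    have : x ∈ Metric.ball s δ := by
      rw [Metric.mem_ball, Real.dist_eq, abs_sub_lt_iff]
      exact ⟨by linarith [hx.2], by linarith [hx.1]⟩
    exact hδ x this hxT.2
  have hTeq := clopen_Ioo_eq hTsub hTne hTopen hTcl
  intro t ht
  have htT : t ∈ T := by rw [hTeq]; exact ht
  refine ⟨htT.2, ?_⟩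
  -- τ' t ∈ X from the decomposition
  obtain ⟨g, hg⟩ : ∃ r : ℝ, ⟪lam, τ t⟫ = r := ⟨_, rfl⟩
  obtain ⟨g', hgp⟩ : ∃ r : ℝ, ⟪lam, τ' t⟫ = r := ⟨_, rfl⟩
  have hdc := h.decomp ht
  rw [hg, hgp] at hdc
  have hgt' : g' ≠ 0 := hgp ▸ hnd t ht
  have hk2 : (k:ℝ) ^ 2 ≠ 0 := pow_ne_zero _ (ne_of_gt h.hk)
  have hcoef : g' / k ^ 2 ≠ 0 := div_ne_zero hgt' hk2
  have hmem : (g' / k ^ 2) • τ' t ∈ X := by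
    have heq : (g' / k ^ 2) • τ' t = lam - g • τ t := by
      rw [hdc]; abel
    rw [heq]
    exact X.sub_mem hXlam (X.smul_mem _ htT.2)
  have hfin := X.smul_mem (g' / k ^ 2)⁻¹ hmem
  rwa [smul_smul, inv_mul_cancel₀ hcoef, one_smul] at hfin

end GC

lemma submodule_eq_of_le_of_finrank_le {n : ℕ} {p q : Submodule ℝ (E n)} (hle : p ≤ q)
    (hfr : Module.finrank ℝ q ≤ Module.finrank ℝ p) : p = q := by
  by_contra hne
  have hlt : p < q := lt_of_le_of_ne hle hne
  exact absurd (Submodule.finrank_lt_finrank_of_lt hlt) (not_lt.2 hfr)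

lemma span_pair_finrank {n : ℕ} {x y : E n} (hx : x ≠ 0) (hy : y ≠ 0) (hxy : ⟪x, y⟫ = 0) :
    Module.finrank ℝ (Submodule.span ℝ ({x, y} : Set (E n))) = 2 := by
  have hli : LinearIndependent ℝ ![x, y] := by
    rw [linearIndependent_fin2]
    constructor
    · simpa using hy
    · intro c hc
      simp only [Matrix.cons_val_one, Matrix.head_cons, Matrix.cons_val_zero] at hc
      apply hx
      have h1 : ⟪x, y⟫ = c * ⟪y, y⟫ := by rw [← hc, real_inner_smul_left]
      have h2 : ⟪y, y⟫ ≠ 0 := inner_self_ne_zero.2 hy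
      have hc0 : c = 0 := by
        rw [hxy] at h1
        rcases mul_eq_zero.1 h1.symm with h | h
        · exact h
        · exact absurd h h2
      rw [← hc, hc0, zero_smul]
  have hr : Set.range ![x, y] = {x, y} := by
    ext z
    simp [Matrix.range_cons, Matrix.range_empty, or_comm]
  have := finrank_span_eq_card hli
  rw [hr] at this
  simpa using this

namespace GC
variable {n : ℕ} {τ τ' : ℝ → E n} {lam : E n} {k a b : ℝ}

lemma isolated (h : GC n τ τ' lam k a b) {s : ℝ} (hs : s ∈ Ioo a b)
    (hdeg : τ s = lam ∨ τ s = -lam) :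
    ∃ δ > 0, ∀ y ∈ Ioo a b, y ≠ s → |y - s| < δ → (τ y ≠ lam ∧ τ y ≠ -lam) := by
  have hder := h.hd s hs
  have hkpos := h.hk
  have hε : (0:ℝ) < k / 2 := by linarith
  have hlo := (hasDerivAt_iff_isLittleO.1 hder).def hε
  obtain ⟨δ₁, hδ₁pos, hδ₁⟩ := Metric.eventually_nhds_iff.1 hlo
  refine ⟨min δ₁ (1 / k), lt_min hδ₁pos (by positivity), ?_⟩
  intro y hyI hys hyd
  have hyd1 : |y - s| < δ₁ := lt_of_lt_of_le hyd (min_le_left _ _)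
  have hyd2 : |y - s| < 1 / k := lt_of_lt_of_le hyd (min_le_right _ _)
  have hbnd := hδ₁ (show dist y s < δ₁ by rwa [Real.dist_eq])
  -- ‖τ y - τ s - (y - s) • τ' s‖ ≤ k/2 * ‖y - s‖
  have habs : (0:ℝ) < |y - s| := abs_pos.2 (sub_ne_zero.2 hys)
  have hknorm : ‖τ' s‖ = k := h.hτ'k s hs
  have key : ∀ hyy : τ y = τ s ∨ τ y = -τ s, False := by
    rintro (hyy | hyy)
    · rw [hyy] at hbnd
      simp only [sub_self, zero_sub, norm_neg, norm_smul, Real.norm_eq_abs, hknorm] at hbnd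
      have : |y - s| * k ≤ k / 2 * |y - s| := by
        simpa [Real.norm_eq_abs] using hbnd
      nlinarith
    · rw [hyy] at hbnd
      have h1 : ‖-τ s - τ s - (y - s) • τ' s‖ ≥ ‖(-2 : ℝ) • τ s‖ - ‖(y - s) • τ' s‖ := by
        have : -τ s - τ s - (y - s) • τ' s = (-2 : ℝ) • τ s - (y - s) • τ' s := by
          rw [neg_smul]; module
        rw [this]
        exact norm_sub_norm_le _ _ |>.trans (le_refl _) |>.trans (le_refl _)
      have h2 : ‖(-2 : ℝ) • τ s‖ = 2 := by
        rw [norm_smul, h.hτ1 s hs]; norm_num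
      have h3 : ‖(y - s) • τ' s‖ = |y - s| * k := by
        rw [norm_smul, Real.norm_eq_abs, hknorm]
      have h4 : |y - s| * k < 1 := by
        have := (lt_div_iff₀ hkpos).1 hyd2
        nlinarith
      have h5 : k / 2 * |y - s| < 1 / 2 := by
        have := (lt_div_iff₀ hkpos).1 hyd2
        nlinarith
      rw [Real.norm_eq_abs] at hbnd
      nlinarith [hbnd, h1, h2 ▸ h1]
  constructor
  · intro heq
    rcases hdeg with hd1 | hd1
    · exact key (Or.inl (heq.trans hd1.symm))
    · refine key (Or.inr ?_)
      rw [heq, hd1, neg_neg]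
  · intro heq
    rcases hdeg with hd1 | hd1
    · refine key (Or.inr ?_)
      rw [heq, hd1]
    · exact key (Or.inl (heq.trans hd1.symm))

end GC

namespace GC
variable {n : ℕ} {τ τ' : ℝ → E n} {lam : E n} {k a b : ℝ}

lemma tau_ne_zero (h : GC n τ τ' lam k a b) {t : ℝ} (ht : t ∈ Ioo a b) : τ t ≠ 0 := by
  intro h0
  have := h.hτ1 t ht; rw [h0, norm_zero] at this; norm_num at this

lemma tau'_ne_zero (h : GC n τ τ' lam k a b) {t : ℝ} (ht : t ∈ Ioo a b) : τ' t ≠ 0 := by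
  intro h0
  have h1 := h.hτ'k t ht; rw [h0, norm_zero] at h1
  exact absurd h1.symm (ne_of_gt h.hk)

lemma lam_ne_zero (h : GC n τ τ' lam k a b) : lam ≠ 0 := by
  intro h0; have := h.hlam; rw [h0, norm_zero] at this; norm_num at this

set_option maxHeartbeats 1000000 in
lemma main (h : GC n τ τ' lam k a b) (hab : a < b) :
    ∃ X : Submodule ℝ (E n), Module.finrank ℝ X = 2 ∧ lam ∈ X ∧
      ∀ t ∈ Ioo a b, τ t ∈ X := by
  set t₀ : ℝ := (a + b) / 2 with ht₀def
  have ht₀ : t₀ ∈ Ioo a b := ⟨by rw [ht₀def]; linarith, by rw [ht₀def]; linarith⟩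
  have hspan2 : ∀ t ∈ Ioo a b,
      Module.finrank ℝ (Submodule.span ℝ ({τ t, τ' t} : Set (E n))) = 2 :=
    fun t ht => span_pair_finrank (h.tau_ne_zero ht) (h.tau'_ne_zero ht) (h.orth ht)
  have hlamspan : ∀ t ∈ Ioo a b, lam ∈ Submodule.span ℝ ({τ t, τ' t} : Set (E n)) := by
    intro t ht
    have h1 : τ t ∈ Submodule.span ℝ ({τ t, τ' t} : Set (E n)) :=
      Submodule.subset_span (mem_insert _ _)
    have h2 : τ' t ∈ Submodule.span ℝ ({τ t, τ' t} : Set (E n)) :=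
      Submodule.subset_span (mem_insert_of_mem _ rfl)
    rw [h.decomp ht]
    exact Submodule.add_mem _ (Submodule.smul_mem _ _ h1) (Submodule.smul_mem _ _ h2)
  set X : Submodule ℝ (E n) := Submodule.span ℝ ({τ t₀, τ' t₀} : Set (E n)) with hXdef
  have hXclosed : IsClosed (X : Set (E n)) := Submodule.closed_of_finiteDimensional X
  have hXfr : Module.finrank ℝ X = 2 := hspan2 t₀ ht₀
  have hXlam : lam ∈ X := hlamspan t₀ ht₀
  refine ⟨X, hXfr, hXlam, ?_⟩
  set T : Set ℝ := {t | t ∈ Ioo a b ∧ τ t ∈ X ∧ τ' t ∈ X} with hTdef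
  have hTsub : T ⊆ Ioo a b := fun t ht => ht.1
  have hTne : T.Nonempty := ⟨t₀, ht₀, Submodule.subset_span (mem_insert _ _),
    Submodule.subset_span (mem_insert_of_mem _ rfl)⟩
  suffices hTeq : T = Ioo a b by
    intro t ht
    have htT : t ∈ T := by rw [hTeq]; exact ht
    exact htT.2.1
  apply clopen_Ioo_eq hTsub hTne
  · -- openness
    rintro s ⟨hsI, hsX, hs'X⟩
    by_cases hgs : ⟪lam, τ' s⟫ = 0
    · -- degenerate point
      obtain ⟨δ₁, hδ₁pos, hiso⟩ := h.isolated hsI ((h.deg_iff hsI).1 hgs)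
      set δ : ℝ := min δ₁ (min (s - a) (b - s)) / 2 with hδdef
      have hδpos : 0 < δ := by
        rw [hδdef]
        have := hsI.1; have := hsI.2
        exact div_pos (lt_min hδ₁pos (lt_min (by linarith) (by linarith))) (by norm_num)
      have hδlt : δ < δ₁ := by
        rw [hδdef]
        have h1 : min δ₁ (min (s - a) (b - s)) ≤ δ₁ := min_le_left _ _
        linarith
      have hδa : δ ≤ (s - a) / 2 := by
        rw [hδdef]
        have h1 : min δ₁ (min (s - a) (b - s)) ≤ s - a :=
          le_trans (min_le_right _ _) (min_le_left _ _)
        linarith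
      have hδb : δ ≤ (b - s) / 2 := by
        rw [hδdef]
        have h1 : min δ₁ (min (s - a) (b - s)) ≤ b - s :=
          le_trans (min_le_right _ _) (min_le_right _ _)
        linarith
      have hsubI : Ioo (s - δ) (s + δ) ⊆ Ioo a b := by
        intro x hx
        have := hsI.1; have := hsI.2
        exact ⟨by linarith [hx.1], by linarith [hx.2]⟩
      have hnd : ∀ y ∈ Ioo (s - δ) (s + δ), y ≠ s → ⟪lam, τ' y⟫ ≠ 0 := by
        intro y hy hys h0
        have hyI : y ∈ Ioo a b := hsubI hy
        have hdist : |y - s| < δ₁ := by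
          rw [abs_sub_lt_iff]
          constructor
          · linarith [hy.2]
          · linarith [hy.1]
        have hne2 := hiso y hyI hys hdist
        rcases (h.deg_iff hyI).1 h0 with h1 | h1
        · exact hne2.1 h1
        · exact hne2.2 h1
      set X₂ : Submodule ℝ (E n) := Submodule.span ℝ ({lam, τ' s} : Set (E n)) with hX₂def
      have hX₂fr : Module.finrank ℝ X₂ = 2 :=
        span_pair_finrank h.lam_ne_zero (h.tau'_ne_zero hsI) hgs
      have hX₂le : X₂ ≤ X := by
        rw [hX₂def, Submodule.span_le]
        rintro z hz
        rcases hz with rfl | hz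
        · exact hXlam
        · rw [mem_singleton_iff] at hz; rw [hz]; exact hs'X
      have hX₂X : X₂ = X := submodule_eq_of_le_of_finrank_le hX₂le (by rw [hXfr, hX₂fr])
      have hside : ∀ lo hi : ℝ, lo < hi → Ioo lo hi ⊆ Ioo (s - δ) (s + δ) →
          (∀ y ∈ Ioo lo hi, y ≠ s) → s ∈ closure (Ioo lo hi) →
          ∀ y ∈ Ioo lo hi, τ y ∈ X ∧ τ' y ∈ X := by
        intro lo hi hlohi hJsub hJne hscl
        have hJI : Ioo lo hi ⊆ Ioo a b := fun y hy => hsubI (hJsub hy)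
        set c : ℝ := (lo + hi) / 2 with hcdef
        have hcJ : c ∈ Ioo lo hi := ⟨by rw [hcdef]; linarith, by rw [hcdef]; linarith⟩
        set Y : Submodule ℝ (E n) := Submodule.span ℝ ({τ c, τ' c} : Set (E n)) with hYdef
        have hYfr : Module.finrank ℝ Y = 2 := hspan2 c (hJI hcJ)
        have hYlam : lam ∈ Y := hlamspan c (hJI hcJ)
        have hYclosed : IsClosed (Y : Set (E n)) := Submodule.closed_of_finiteDimensional Y
        have hGCJ : GC n τ τ' lam k lo hi := h.mono hJI
        have hndJ : ∀ y ∈ Ioo lo hi, ⟪lam, τ' y⟫ ≠ 0 := fun y hy =>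
          hnd y (hJsub hy) (hJne y hy)
        have hcore := hGCJ.core hndJ Y hYlam hcJ (Submodule.subset_span (mem_insert _ _))
        have h's : τ' s ∈ Y := by
          have hcw : ContinuousWithinAt τ' (Ioo lo hi) s := (h.hcont s hsI).mono hJI
          have hnb : (𝓝[Ioo lo hi] s).NeBot := mem_closure_iff_nhdsWithin_neBot.1 hscl
          apply hYclosed.mem_of_tendsto hcw
          filter_upwards [self_mem_nhdsWithin] with y hy
          exact (hcore y hy).2
        have hX₂Y : X₂ ≤ Y := by
          rw [hX₂def, Submodule.span_le]
          rintro z hz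
          rcases hz with rfl | hz
          · exact hYlam
          · rw [mem_singleton_iff] at hz; rw [hz]; exact h's
        have hYX₂ : X₂ = Y := submodule_eq_of_le_of_finrank_le hX₂Y (by rw [hYfr, hX₂fr])
        intro y hy
        have h1 := hcore y hy
        rw [← hYX₂, hX₂X] at h1
        exact h1
      refine ⟨δ, hδpos, ?_⟩
      rintro y ⟨hyδ, hyI⟩
      rcases lt_trichotomy y s with hlt | heq | hgt
      · have hcl : s ∈ closure (Ioo (s - δ) s) := by
          rw [closure_Ioo (by linarith : s - δ ≠ s)]
          exact ⟨by linarith, le_refl s⟩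
        have := hside (s - δ) s (by linarith)
          (fun z hz => ⟨hz.1, by linarith [hz.2]⟩)
          (fun z hz => ne_of_lt hz.2) hcl y ⟨hyδ.1, hlt⟩
        exact ⟨hyI, this⟩
      · exact ⟨hyI, by rw [heq]; exact hsX, by rw [heq]; exact hs'X⟩
      · have hcl : s ∈ closure (Ioo s (s + δ)) := by
          rw [closure_Ioo (by linarith : s ≠ s + δ)]
          exact ⟨le_refl s, by linarith⟩
        have := hside s (s + δ) (by linarith)
          (fun z hz => ⟨by linarith [hz.1], hz.2⟩)
          (fun z hz => (ne_of_gt hz.1)) hcl y ⟨hgt, hyδ.2⟩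
        exact ⟨hyI, this⟩
    · -- nondegenerate point : Gronwall
      have hcw : ContinuousWithinAt (fun y => ⟪lam, τ' y⟫) (Ioo a b) s :=
        (continuousOn_const.inner h.hcont) s hsI
      have hev : ∀ᶠ y in 𝓝[Ioo a b] s, ⟪lam, τ' y⟫ ∈ ({(0:ℝ)}ᶜ : Set ℝ) :=
        hcw.eventually (isOpen_compl_singleton.eventually_mem hgs)
      obtain ⟨δ₂, hδ₂pos, hδ₂⟩ := Metric.mem_nhdsWithin_iff.1 hev
      set δ : ℝ := min δ₂ (min (s - a) (b - s)) / 2 with hδdef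
      have hδpos : 0 < δ := by
        rw [hδdef]
        have := hsI.1; have := hsI.2
        exact div_pos (lt_min hδ₂pos (lt_min (by linarith) (by linarith))) (by norm_num)
      have hδlt : δ < δ₂ := by
        rw [hδdef]
        have h1 : min δ₂ (min (s - a) (b - s)) ≤ δ₂ := min_le_left _ _
        linarith
      have hδa : δ ≤ (s - a) / 2 := by
        rw [hδdef]
        have h1 : min δ₂ (min (s - a) (b - s)) ≤ s - a :=
          le_trans (min_le_right _ _) (min_le_left _ _)
        linarith
      have hδb : δ ≤ (b - s) / 2 := by
        rw [hδdef]
        have h1 : min δ₂ (min (s - a) (b - s)) ≤ b - s :=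
          le_trans (min_le_right _ _) (min_le_right _ _)
        linarith
      have hIccsub : Icc (s - δ) (s + δ) ⊆ Ioo a b := by
        intro x hx
        have := hsI.1; have := hsI.2
        exact ⟨by linarith [hx.1], by linarith [hx.2]⟩
      have hg'ne : ∀ y ∈ Icc (s - δ) (s + δ), ⟪lam, τ' y⟫ ≠ 0 := by
        intro y hy
        have hball : y ∈ Metric.ball s δ₂ := by
          rw [Metric.mem_ball, Real.dist_eq, abs_sub_lt_iff]
          constructor
          · linarith [hy.2]
          · linarith [hy.1]
        exact hδ₂ ⟨hball, hIccsub hy⟩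
      have hgron := h.gron X hXlam hδpos hIccsub hg'ne hsX
      refine ⟨δ, hδpos, ?_⟩
      rintro y ⟨hyδ, hyI⟩
      have := hgron y ⟨le_of_lt hyδ.1, le_of_lt hyδ.2⟩
      exact ⟨hyI, this.1, this.2⟩
  · -- closedness
    intro s hsI hsT
    by_cases hτX : τ s ∈ X
    · have hτ'X : τ' s ∉ X := fun hmem => hsT ⟨hsI, hτX, hmem⟩
      have hcw : ContinuousWithinAt τ' (Ioo a b) s := h.hcont s hsI
      have hev : ∀ᶠ y in 𝓝[Ioo a b] s, τ' y ∈ ((X : Set (E n))ᶜ) :=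
        hcw.eventually (hXclosed.isOpen_compl.eventually_mem hτ'X)
      obtain ⟨δ, hδpos, hδ⟩ := Metric.mem_nhdsWithin_iff.1 hev
      refine ⟨δ, hδpos, ?_⟩
      ext x
      simp only [mem_inter_iff, mem_empty_iff_false, iff_false, not_and]
      intro hx hxT
      have hball : x ∈ Metric.ball s δ := by
        rw [Metric.mem_ball, Real.dist_eq, abs_sub_lt_iff]
        exact ⟨by linarith [hx.2], by linarith [hx.1]⟩
      exact hδ ⟨hball, hxT.1⟩ hxT.2.2
    · have hcont : ContinuousAt τ s := (h.hd s hsI).continuousAt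
      have hev : ∀ᶠ y in 𝓝 s, τ y ∈ ((X : Set (E n))ᶜ) :=
        hcont.eventually (hXclosed.isOpen_compl.eventually_mem hτX)
      obtain ⟨δ, hδpos, hδ⟩ := Metric.eventually_nhds_iff.1 hev
      refine ⟨δ, hδpos, ?_⟩
      ext x
      simp only [mem_inter_iff, mem_empty_iff_false, iff_false, not_and]
      intro hx hxT
      have hball : dist x s < δ := by
        rw [Real.dist_eq, abs_sub_lt_iff]
        exact ⟨by linarith [hx.2], by linarith [hx.1]⟩
      exact hδ hball hxT.2.1

end GC

set_option maxHeartbeats 1000000 in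
/-- A Lipschitz function whose a.e. derivative is nonnegative is monotone (endpoint version). -/
lemma le_of_ae_deriv_nonneg {F F' : ℝ → ℝ} {a b : ℝ} {C : ℝ≥0}
    (hab : a ≤ b) (hlip : LipschitzOnWith C F (Icc a b))
    (hae : ∀ᵐ y ∂(volume.restrict (Ioo a b)), HasDerivAt F (F' y) y ∧ 0 ≤ F' y) :
    F a ≤ F b := by
  rcases eq_or_lt_of_le hab with rfl | hab'
  · exact le_refl _
  suffices H : ∀ ε > 0, F a ≤ F b + ε by
    by_contra hcon
    push_neg at hcon
    have := H ((F a - F b) / 2) (by linarith)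
    linarith
  intro ε hε
  set C' : ℝ := (C : ℝ) + 1 with hC'def
  have hC'pos : 0 < C' := by positivity
  set ε₀ : ℝ := ε / (2 * (1 + b - a)) with hε₀def
  have hε₀pos : 0 < ε₀ := by rw [hε₀def]; exact div_pos hε (by linarith)
  set εU : ℝ := ε / (8 * C') with hεUdef
  have hεUpos : 0 < εU := by rw [hεUdef]; positivity
  -- the bad set is null
  set Nset : Set ℝ := ({y | ¬(HasDerivAt F (F' y) y ∧ 0 ≤ F' y)} ∩ Ioo a b) ∪ {a} with hNdef
  have hN0 : volume Nset = 0 := by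
    apply measure_union_null
    · have h1 := ae_iff.1 hae
      rwa [Measure.restrict_apply' measurableSet_Ioo] at h1
    · exact measure_singleton a
  obtain ⟨U, hNU, hUopen, hUvol⟩ :=
    Set.exists_isOpen_lt_of_lt Nset (ENNReal.ofReal εU)
      (by rw [hN0]; exact ENNReal.ofReal_pos.2 hεUpos)
  have hUfin : volume U ≠ ⊤ := ne_top_of_lt (lt_of_lt_of_le hUvol le_top)
  set φ : ℝ → ℝ := fun y => (volume (U ∩ Ioc a y)).toReal with hφdef
  have hφfin : ∀ y, volume (U ∩ Ioc a y) ≠ ⊤ :=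
    fun y => ne_top_of_le_ne_top hUfin (measure_mono (inter_subset_left))
  have hφa : φ a = 0 := by rw [hφdef]; simp
  have hφadd : ∀ y z : ℝ, a ≤ y → y ≤ z →
      φ z = φ y + (volume (U ∩ Ioc y z)).toReal := by
    intro y z hay hyz
    have hsplit : U ∩ Ioc a z = (U ∩ Ioc a y) ∪ (U ∩ Ioc y z) := by
      rw [← inter_union_distrib_left, Ioc_union_Ioc_eq_Ioc hay hyz]
    have hdisj : Disjoint (U ∩ Ioc a y) (U ∩ Ioc y z) :=
      (Ioc_disjoint_Ioc_of_le (a := a) (d := z) (le_refl y)).mono inter_subset_right inter_subset_right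
    have hmeas : MeasurableSet (U ∩ Ioc y z) :=
      (hUopen.measurableSet).inter measurableSet_Ioc
    rw [hφdef]
    simp only
    rw [hsplit, measure_union hdisj hmeas,
      ENNReal.toReal_add (hφfin y) (ne_top_of_le_ne_top hUfin (measure_mono inter_subset_left))]
  have hφmono : ∀ y z : ℝ, a ≤ y → y ≤ z → φ y ≤ φ z := by
    intro y z hay hyz
    rw [hφadd y z hay hyz]
    have := ENNReal.toReal_nonneg (a := volume (U ∩ Ioc y z))
    linarith
  have hφbnd : ∀ y z : ℝ, a ≤ y → y ≤ z → φ z - φ y ≤ z - y := by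
    intro y z hay hyz
    rw [hφadd y z hay hyz]
    have h1 : volume (U ∩ Ioc y z) ≤ ENNReal.ofReal (z - y) := by
      calc volume (U ∩ Ioc y z) ≤ volume (Ioc y z) := measure_mono inter_subset_right
        _ = ENNReal.ofReal (z - y) := Real.volume_Ioc
    have h2 := ENNReal.toReal_le_of_le_ofReal (by linarith) h1
    linarith
  have hφjump : ∀ x z : ℝ, a ≤ x → x < z → Ioc x z ⊆ U → φ z = φ x + (z - x) := by
    intro x z hax hxz hsub
    rw [hφadd x z hax (le_of_lt hxz), inter_eq_right.2 hsub, Real.volume_Ioc,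
      ENNReal.toReal_ofReal (by linarith)]
  -- the comparison function
  set G : ℝ → ℝ := fun y => F y + ε₀ * (y - a) + 2 * C' * φ y with hGdef
  have hGcont : ContinuousOn G (Icc a b) := by
    apply ContinuousOn.add
    apply ContinuousOn.add
    · exact hlip.continuousOn
    · exact (continuous_const.mul (continuous_id.sub continuous_const)).continuousOn
    · apply continuous_const.continuousOn.mul
      have hφlip : LipschitzOnWith 1 φ (Icc a b) := by
        apply LipschitzOnWith.of_dist_le_mul
        intro y hy z hz
        rw [NNReal.coe_one, one_mul, Real.dist_eq, Real.dist_eq]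
        rcases le_total y z with hyz | hzy
        · have h1 := hφbnd y z hy.1 hyz
          have h2 := hφmono y z hy.1 hyz
          rw [abs_of_nonpos (by linarith), abs_of_nonpos (by linarith)]
          linarith
        · have h1 := hφbnd z y hz.1 hzy
          have h2 := hφmono z y hz.1 hzy
          rw [abs_of_nonneg (by linarith), abs_of_nonneg (by linarith)]
          linarith
      exact hφlip.continuousOn
  set A : Set ℝ := Icc a b ∩ G ⁻¹' (Ici (G a)) with hAdef
  have hAclosed : IsClosed A := hGcont.preimage_isClosed_of_isClosed isClosed_Icc isClosed_Ici
  have hAne : A.Nonempty := ⟨a, ⟨le_refl a, hab⟩, le_refl (G a)⟩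
  have hAbdd : BddAbove A := BddAbove.mono (fun x hx => hx.1) bddAbove_Icc
  set c : ℝ := sSup A with hcdef
  have hcA : c ∈ A := hAclosed.csSup_mem hAne hAbdd
  have hcIcc : c ∈ Icc a b := hcA.1
  have hcb : c = b := by
    by_contra hne
    have hcltb : c < b := lt_of_le_of_ne hcIcc.2 hne
    by_cases hcU : c ∈ U
    · -- jump case
      obtain ⟨r, hrpos, hball⟩ := Metric.isOpen_iff.1 hUopen c hcU
      set z : ℝ := min (c + r / 2) ((c + b) / 2) with hzdef
      have hz1 : c < z := by
        rw [hzdef]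
        apply lt_min (by linarith) (by linarith)
      have hz2 : z ≤ b := by
        rw [hzdef]
        have : (c + b) / 2 ≤ b := by linarith
        exact le_trans (min_le_right _ _) this
      have hz3 : z - c < r := by
        rw [hzdef]
        have : min (c + r / 2) ((c + b) / 2) ≤ c + r / 2 := min_le_left _ _
        linarith
      have hsubU : Ioc c z ⊆ U := by
        intro w hw
        apply hball
        rw [Metric.mem_ball, Real.dist_eq, abs_sub_lt_iff]
        constructor
        · linarith [hw.2]
        · linarith [hw.1]
      have hφz := hφjump c z hcIcc.1 hz1 hsubU
      have hzIcc : z ∈ Icc a b := ⟨by linarith [hcIcc.1], hz2⟩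
      have hFz : F z - F c ≥ -(C' * (z - c)) := by
        have := hlip.dist_le_mul z hzIcc c hcIcc
        rw [Real.dist_eq, Real.dist_eq] at this
        have h2 : |F z - F c| ≤ C' * |z - c| := by
          rw [hC'def]
          have habs : (0:ℝ) ≤ |z - c| := abs_nonneg _
          nlinarith [this]
        rw [abs_of_nonneg (by linarith : (0:ℝ) ≤ z - c)] at h2
        have := (abs_le.1 h2).1
        linarith
      have hGz : G a ≤ G z := by
        have h1 : G z - G c = (F z - F c) + ε₀ * (z - c) + 2 * C' * (φ z - φ c) := by
          rw [hGdef]; ring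
        rw [hφz] at h1
        have h2 : G z - G c ≥ ε₀ * (z - c) + C' * (z - c) := by
          rw [h1]; ring_nf; nlinarith [hFz]
        have h3 : (0:ℝ) < ε₀ * (z - c) := mul_pos hε₀pos (by linarith)
        have h4 : (0:ℝ) < C' * (z - c) := mul_pos hC'pos (by linarith)
        have := hcA.2
        simp only [mem_preimage, mem_Ici] at this
        linarith
      have : z ∈ A := ⟨hzIcc, hGz⟩
      have := le_csSup hAbdd this
      rw [← hcdef] at this
      linarith
    · -- derivative case
      have hcN : c ∉ Nset := fun hmem => hcU (hNU hmem)
      have hca : c ≠ a := by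
        intro heq
        apply hcN
        rw [hNdef, heq]
        exact Or.inr rfl
      have hcIoo : c ∈ Ioo a b := ⟨lt_of_le_of_ne hcIcc.1 (Ne.symm hca), hcltb⟩
      have hp : HasDerivAt F (F' c) c ∧ 0 ≤ F' c := by
        by_contra hnp
        exact hcN (Or.inl ⟨hnp, hcIoo⟩)
      have hslope := hasDerivAt_iff_tendsto_slope.1 hp.1
      have hev1 : ∀ᶠ z in 𝓝[≠] c, -(ε₀ / 2) < slope F c z :=
        hslope.eventually (eventually_gt_nhds (by linarith [hp.2]))
      have hev2 : ∀ᶠ z in 𝓝[>] c, -(ε₀ / 2) < slope F c z :=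
        hev1.filter_mono (nhdsWithin_mono c (fun x hx => ne_of_gt hx))
      have hev3 : ∀ᶠ z in 𝓝[>] c, z ∈ Ioo c b := Ioo_mem_nhdsGT hcltb
      obtain ⟨z, hz1, hz2⟩ := (hev2.and hev3).exists
      have hzc : c < z := hz2.1
      have hFz : F z - F c > -(ε₀ / 2) * (z - c) := by
        have hs : slope F c z = (F z - F c) / (z - c) := slope_def_field F c z
        rw [hs] at hz1
        have h2 := (lt_div_iff₀ (by linarith : (0:ℝ) < z - c)).1 hz1
        linarith
      have hzIcc : z ∈ Icc a b := ⟨by linarith [hcIcc.1], le_of_lt hz2.2⟩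
      have hGz : G a ≤ G z := by
        have h1 : G z - G c = (F z - F c) + ε₀ * (z - c) + 2 * C' * (φ z - φ c) := by
          rw [hGdef]; ring
        have h2 : 0 ≤ φ z - φ c := by
          have := hφmono c z hcIcc.1 (le_of_lt hzc)
          linarith
        have h3 : G z - G c > 0 := by
          rw [h1]
          nlinarith [hFz]
        have := hcA.2
        simp only [mem_preimage, mem_Ici] at this
        linarith
      have : z ∈ A := ⟨hzIcc, hGz⟩
      have := le_csSup hAbdd this
      rw [← hcdef] at this
      linarith
  -- conclude
  have hbA : b ∈ A := by rw [← hcb]; exact hcA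
  have hGab : G a ≤ G b := hbA.2
  have hφb : φ b ≤ εU := by
    have h1 : volume (U ∩ Ioc a b) ≤ ENNReal.ofReal εU :=
      le_trans (measure_mono inter_subset_left) (le_of_lt hUvol)
    exact ENNReal.toReal_le_of_le_ofReal (le_of_lt hεUpos) h1
  have hGa : G a = F a := by rw [hGdef]; simp [hφa]
  have hGb : G b = F b + ε₀ * (b - a) + 2 * C' * φ b := by rw [hGdef]
  rw [hGa, hGb] at hGab
  have h1 : ε₀ * (b - a) ≤ ε / 2 := by
    rw [hε₀def]
    rw [div_mul_eq_mul_div, div_le_iff₀ (by linarith : (0:ℝ) < 2 * (1 + b - a))]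
    nlinarith
  have h2 : 2 * C' * φ b ≤ ε / 4 := by
    have h3 : 2 * C' * φ b ≤ 2 * C' * εU := by nlinarith
    rw [hεUdef] at h3
    have h4 : 2 * C' * (ε / (8 * C')) = ε / 4 := by field_simp; ring
    linarith [h4 ▸ h3]
  have hφbnn : 0 ≤ φ b := by rw [hφdef]; positivity
  clear_value C' ε₀ εU φ G A c
  have hfinal : F a ≤ F b + ε := by
    have s1 : F a ≤ F b + ε / 2 + ε / 4 := by linarith [hGab, h1, h2]
    linarith [s1]
  exact hfinal


set_option maxHeartbeats 1000000 in
/-- **Lemma (great circles).**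
In the structure setting: if `(t₁,t₂) ⊆ Ω`, then on `(t₁,t₂)` the map `τ`
follows a great circle in `S^{n-1}` through `λ` with constant speed `k`;
moreover, if `(t₁,t₂)` is a connected component of `Ω`, then there is
`t₀ ∈ (t₁,t₂)` with `τ(t₀) = ±λ`. -/
theorem great_circle_on_components
    (n : ℕ) (hn : 2 ≤ n) (L : ℝ) (hL : 0 < L)
    (β : ℝ → ℝ) (hβpos : ∀ t ∈ Icc (0:ℝ) L, 0 < β t)
    (hβBV : BoundedVariationOn β (Icc 0 L))
    (hβinv : ∃ c : ℝ, 0 < c ∧ ∀ t ∈ Icc (0:ℝ) L, c ≤ β t)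
    (τ τ' : ℝ → E n) (hτ : IsW1InftySphere n L τ τ')
    (k : ℝ) (hk : k = Kinf n L τ') (hkpos : 0 < k)
    (lam : E n) (hlam : ‖lam‖ = 1)
    (f f' : ℝ → ℝ) (hf : IsW1InftyR L f f')
    (hf0 : ¬ ∀ t ∈ Icc (0:ℝ) L, f t = 0)
    (hfnn : ∀ t ∈ Icc (0:ℝ) L, 0 ≤ f t)
    (heq1 : WeakFEq1 n L k β lam τ τ' f f')
    (heq2 : WeakFEq2 n L β lam τ' f')
    (Ω : Set ℝ) (hΩ : Ω = {t ∈ Icc (0:ℝ) L | 0 < f t})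
    (hτd : ∀ t ∈ Ω, HasDerivWithinAt τ (τ' t) (Icc 0 L) t)
    (hτ'cont : ContinuousOn τ' Ω)
    (hτ'k : ∀ t ∈ Ω, ‖τ' t‖ = k)
    (hdep : ∀ t ∈ Ω, ¬ LinearIndependent ℝ ![τ t, τ' t, lam])
    (t₁ t₂ : ℝ) (hsub : Ioo t₁ t₂ ⊆ Ω) :
    (∃ X : Submodule ℝ (E n), Module.finrank ℝ X = 2 ∧ lam ∈ X ∧
      ∀ t ∈ Ioo t₁ t₂, τ t ∈ X) ∧
    (∀ t ∈ Ioo t₁ t₂, ‖τ' t‖ = k) ∧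
    ((∃ t ∈ Ω, connectedComponentIn Ω t = Ioo t₁ t₂) →
      ∃ t₀ ∈ Ioo t₁ t₂, τ t₀ = lam ∨ τ t₀ = -lam) := by
  have hlamne : lam ≠ 0 := by
    intro h0; rw [h0, norm_zero] at hlam; norm_num at hlam
  by_cases hne : t₁ < t₂
  · -- nonempty interval
    have hIccsub : Ioo t₁ t₂ ⊆ Icc 0 L := by
      intro x hx
      have := hsub hx
      rw [hΩ] at this
      exact this.1
    have ht₁0 : 0 ≤ t₁ := by
      by_contra hcon
      push_neg at hcon
      have hm : t₁ < min 0 t₂ := lt_min hcon hne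
      set x : ℝ := (t₁ + min 0 t₂) / 2 with hxdef
      have hx1 : t₁ < x := by rw [hxdef]; linarith
      have hx2 : x < min 0 t₂ := by rw [hxdef]; linarith
      have hxI : x ∈ Ioo t₁ t₂ := ⟨hx1, lt_of_lt_of_le hx2 (min_le_right _ _)⟩
      have := (hIccsub hxI).1
      have := lt_of_lt_of_le hx2 (min_le_left _ _)
      linarith
    have ht₂L : t₂ ≤ L := by
      by_contra hcon
      push_neg at hcon
      have hm : max L t₁ < t₂ := max_lt hcon hne
      set x : ℝ := (max L t₁ + t₂) / 2 with hxdef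
      have hx1 : max L t₁ < x := by rw [hxdef]; linarith
      have hx2 : x < t₂ := by rw [hxdef]; linarith
      have hxI : x ∈ Ioo t₁ t₂ := ⟨lt_of_le_of_lt (le_max_right _ _) hx1, hx2⟩
      have := (hIccsub hxI).2
      have := lt_of_le_of_lt (le_max_left _ _) hx1
      linarith
    have hIooL : ∀ x ∈ Ioo t₁ t₂, x ∈ Ioo 0 L :=
      fun x hx => ⟨lt_of_le_of_lt ht₁0 hx.1, lt_of_lt_of_le hx.2 ht₂L⟩
    have hGC : GC n τ τ' lam k t₁ t₂ := by
      refine ⟨hkpos, hlam, ?_, ?_, fun t ht => hτ'k t (hsub ht), hτ'cont.mono hsub,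
        fun t ht => hdep t (hsub ht)⟩
      · intro t ht
        have hw := hτd t (hsub ht)
        have hnb : Icc (0:ℝ) L ∈ 𝓝 t := Icc_mem_nhds (hIooL t ht).1 (hIooL t ht).2
        exact hw.hasDerivAt hnb
      · intro t ht
        exact hτ.2.2 t (hIccsub ht)
    refine ⟨hGC.main hne, fun t ht => hτ'k t (hsub ht), ?_⟩
    -- third part
    rintro ⟨t, htΩ, hcomp⟩
    have htI : t ∈ Ioo t₁ t₂ := by
      rw [← hcomp]
      exact mem_connectedComponentIn htΩ
    by_contra hno
    push_neg at hno
    have hg'ne : ∀ y ∈ Ioo t₁ t₂, ⟪lam, τ' y⟫ ≠ 0 := by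
      intro y hy h0
      rcases (hGC.deg_iff hy).1 h0 with h1 | h1
      · exact (hno y hy).1 h1
      · exact (hno y hy).2 h1
    -- sign constancy
    have hsign : ∀ y ∈ Ioo t₁ t₂, 0 < ⟪lam, τ' t⟫ * ⟪lam, τ' y⟫ := by
      intro y hy
      rcases lt_trichotomy (⟪lam, τ' t⟫ * ⟪lam, τ' y⟫) 0 with hlt | heq | hgt
      · exfalso
        have huIcc : uIcc t y ⊆ Ioo t₁ t₂ :=
          (Set.ordConnected_Ioo).uIcc_subset htI hy
        have hcont : ContinuousOn (fun z => ⟪lam, τ' z⟫) (uIcc t y) :=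
          (continuousOn_const.inner hGC.hcont).mono huIcc
        have h0mem : (0:ℝ) ∈ uIcc ⟪lam, τ' t⟫ ⟪lam, τ' y⟫ := by
          rw [Set.mem_uIcc]
          rcases mul_neg_iff.1 hlt with ⟨hp, hq⟩ | ⟨hp, hq⟩
          · right; exact ⟨le_of_lt hq, le_of_lt hp⟩
          · left; exact ⟨le_of_lt hp, le_of_lt hq⟩
        obtain ⟨z, hzu, hz0⟩ := intermediate_value_uIcc hcont h0mem
        exact hg'ne z (huIcc hzu) hz0
      · exfalso
        rcases mul_eq_zero.1 heq with h1 | h1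
        · exact hg'ne t htI h1
        · exact hg'ne y hy h1
      · exact hgt
    -- endpoint zeros of f
    have ht₂Icc : t₂ ∈ Icc (0:ℝ) L := ⟨by linarith, ht₂L⟩
    have ht₁Icc : t₁ ∈ Icc (0:ℝ) L := ⟨ht₁0, by linarith⟩
    have hft₂ : f t₂ = 0 := by
      by_contra hcon
      have hpos : 0 < f t₂ := lt_of_le_of_ne (hfnn t₂ ht₂Icc) (Ne.symm hcon)
      have ht₂Ω : t₂ ∈ Ω := by rw [hΩ]; exact ⟨ht₂Icc, hpos⟩
      have hIoc : Ioc t₁ t₂ ⊆ Ω := by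
        intro x hx
        rcases eq_or_lt_of_le hx.2 with rfl | hlt
        · exact ht₂Ω
        · exact hsub ⟨hx.1, hlt⟩
      have := isPreconnected_Ioc.subset_connectedComponentIn
        (⟨htI.1, le_of_lt htI.2⟩ : t ∈ Ioc t₁ t₂) hIoc
      rw [hcomp] at this
      exact absurd (this ⟨hne, le_refl t₂⟩).2 (lt_irrefl t₂)
    have hft₁ : f t₁ = 0 := by
      by_contra hcon
      have hpos : 0 < f t₁ := lt_of_le_of_ne (hfnn t₁ ht₁Icc) (Ne.symm hcon)
      have ht₁Ω : t₁ ∈ Ω := by rw [hΩ]; exact ⟨ht₁Icc, hpos⟩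
      have hIco : Ico t₁ t₂ ⊆ Ω := by
        intro x hx
        rcases eq_or_lt_of_le hx.1 with rfl | hlt
        · exact ht₁Ω
        · exact hsub ⟨hlt, hx.2⟩
      have := isPreconnected_Ico.subset_connectedComponentIn
        (⟨le_of_lt htI.1, htI.2⟩ : t ∈ Ico t₁ t₂) hIco
      rw [hcomp] at this
      exact absurd (this ⟨le_refl t₁, hne⟩).1 (lt_irrefl t₁)
    have hfpos : 0 < f t := by
      have := htΩ; rw [hΩ] at this; exact this.2
    obtain ⟨C, hClip⟩ := hf.1
    rcases lt_or_gt_of_ne (hg'ne t htI) with hneg | hpos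
    · -- g' < 0 : f decreasing on [t₁, t], so f t ≤ f t₁ = 0
      have hsub2 : Ioo t₁ t ⊆ Ioo 0 L := fun y hy =>
        ⟨lt_of_le_of_lt ht₁0 hy.1, lt_of_lt_of_le (lt_trans hy.2 htI.2) ht₂L⟩
      have hae : ∀ᵐ y ∂(volume.restrict (Ioo t₁ t)),
          HasDerivAt (fun z => -f z) (-f' y) y ∧ 0 ≤ -f' y := by
        have h1 := ae_restrict_of_ae_restrict_of_subset hsub2 hf.2
        have h2 := ae_restrict_of_ae_restrict_of_subset hsub2 heq2
        have h3 := ae_restrict_mem (μ := volume) measurableSet_Ioo (s := Ioo t₁ t)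
        filter_upwards [h1, h2, h3] with y hy1 hy2 hy3
        have hyI : y ∈ Ioo t₁ t₂ := ⟨hy3.1, lt_trans hy3.2 htI.2⟩
        have hyIcc : y ∈ Icc (0:ℝ) L := hIccsub hyI
        have hβy := hβpos y hyIcc
        have hsgn := hsign y hyI
        have hg'neg : ⟪lam, τ' y⟫ < 0 := by nlinarith
        refine ⟨hy1.neg, ?_⟩
        rw [hy2]
        nlinarith
      have hliptneg : LipschitzOnWith C (fun z => -f z) (Icc t₁ t) := by
        apply LipschitzOnWith.of_dist_le_mul
        intro x hx y hy
        have hxL : x ∈ Icc (0:ℝ) L := ⟨by linarith [hx.1], by linarith [hx.2, htI.2]⟩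
        have hyL : y ∈ Icc (0:ℝ) L := ⟨by linarith [hy.1], by linarith [hy.2, htI.2]⟩
        have := hClip.dist_le_mul x hxL y hyL
        simpa [dist_neg_neg] using this
      have h9 := le_of_ae_deriv_nonneg (le_of_lt htI.1) hliptneg hae
      have h10 : -f t₁ ≤ -f t := h9
      linarith
    · -- g' > 0 : f increasing on [t, t₂], so f t ≤ f t₂ = 0
      have hsub2 : Ioo t t₂ ⊆ Ioo 0 L := fun y hy =>
        ⟨lt_trans (lt_of_le_of_lt ht₁0 htI.1) hy.1, lt_of_lt_of_le hy.2 ht₂L⟩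
      have hae : ∀ᵐ y ∂(volume.restrict (Ioo t t₂)),
          HasDerivAt f (f' y) y ∧ 0 ≤ f' y := by
        have h1 := ae_restrict_of_ae_restrict_of_subset hsub2 hf.2
        have h2 := ae_restrict_of_ae_restrict_of_subset hsub2 heq2
        have h3 := ae_restrict_mem (μ := volume) measurableSet_Ioo (s := Ioo t t₂)
        filter_upwards [h1, h2, h3] with y hy1 hy2 hy3
        have hyI : y ∈ Ioo t₁ t₂ := ⟨lt_trans htI.1 hy3.1, hy3.2⟩
        have hyIcc : y ∈ Icc (0:ℝ) L := hIccsub hyI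
        have hβy := hβpos y hyIcc
        have hsgn := hsign y hyI
        have hg'pos : 0 < ⟪lam, τ' y⟫ := by nlinarith
        refine ⟨hy1, ?_⟩
        rw [hy2]
        positivity
      have hlipt : LipschitzOnWith C f (Icc t t₂) := by
        apply hClip.mono
        intro x hx
        exact ⟨by linarith [hx.1, htI.1], by linarith [hx.2]⟩
      have := le_of_ae_deriv_nonneg (le_of_lt htI.2) hlipt hae
      linarith
  · -- empty interval
    have hempty : Ioo t₁ t₂ = ∅ := Ioo_eq_empty hne
    refine ⟨?_, ?_, ?_⟩
    · -- a 2-dimensional subspace containing lam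
      have hfr : Module.finrank ℝ (E n) = n := finrank_euclideanSpace_fin
      have hspanne : Submodule.span ℝ ({lam} : Set (E n)) ≠ ⊤ := by
        intro heq
        have h1 : Module.finrank ℝ (Submodule.span ℝ ({lam} : Set (E n))) = 1 :=
          finrank_span_singleton hlamne
        rw [heq, finrank_top, hfr] at h1
        omega
      obtain ⟨v, hv⟩ : ∃ v : E n, v ∉ Submodule.span ℝ ({lam} : Set (E n)) := by
        by_contra hcon
        push_neg at hcon
        exact hspanne (Submodule.eq_top_iff'.2 hcon)
      set v' : E n := v - ⟪lam, v⟫ • lam with hv'def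
      have hv'ne : v' ≠ 0 := by
        intro h0
        apply hv
        have hveq : v = ⟪lam, v⟫ • lam := sub_eq_zero.1 h0
        rw [hveq]
        exact Submodule.smul_mem _ _ (Submodule.mem_span_singleton_self lam)
      have horth : ⟪lam, v'⟫ = 0 := by
        rw [hv'def, inner_sub_right, real_inner_smul_right, real_inner_self_eq_norm_sq, hlam]
        ring
      refine ⟨Submodule.span ℝ ({lam, v'} : Set (E n)),
        span_pair_finrank hlamne hv'ne horth,
        Submodule.subset_span (mem_insert _ _), ?_⟩
      intro x hx
      rw [hempty] at hx
      exact absurd hx (notMem_empty x)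
    · intro x hx
      rw [hempty] at hx
      exact absurd hx (notMem_empty x)
    · rintro ⟨t, htΩ, hcomp⟩
      have := mem_connectedComponentIn htΩ
      rw [hcomp, hempty] at this
      exact absurd this (notMem_empty t)
end
end

section
/- In the structure setting, let Ω' = {t ∈ [0,L] : τ(t) ≠ λ and τ(t) ≠ −λ} ∪ Ω. Then the set Ω' \ Ω is discrete (each of its points is isolated in Ω' \ Ω). -/
/-!
Let `t₀ ∈ Ω' \ Ω`: then `f t₀ = 0` and `(λ·τ)² < 1` near `t₀`, so it suffices to show that `f`
cannot vanish at two points `p < q` of an interval on which `(λ·τ)² < 1`. If `f ≡ 0` on `(p, q)`,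
then `f' = 0`, hence `λ·τ' = 0` and `proj⊥_{τ,τ'} λ = λ - (λ·τ) τ` there; testing the first
equation with `φ λ`, `φ ≥ 0` a bump supported in `(p, q)`, leaves `∫ β k² φ (1 - (λ·τ)²) = 0`,
which is absurd. Otherwise `(p, q)` contains an interval `(α, γ) ⊆ Ω` with `f α = f γ = 0`.
On it `τ ⊥ τ' ≠ 0` and `τ, τ', λ` are dependent, while `λ` is not parallel to `τ`; this forces
`λ·τ' ≠ 0`, so the continuous function `λ·τ'`, and with it `f' = β λ·τ'`, has a fixed sign, and
the Lipschitz function `f` is strictly monotone on `[α, γ]`.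
-/

open MeasureTheory Set Filter
open scoped RealInnerProductSpace ENNReal Topology NNReal

noncomputable section

lemma projPerp_eq_sub_inner_smul {n : ℕ} {V W x : E n} (hV : ‖V‖ = 1) (hVW : ⟪V, W⟫ = 0)
    (hxW : ⟪x, W⟫ = 0) : projPerp V W x = x - ⟪x, V⟫ • V := by
  have hWx : ⟪W, x⟫ = 0 := by rwa [real_inner_comm]
  have hWV : ⟪W, V⟫ = 0 := by rwa [real_inner_comm]
  refine Submodule.eq_starProjection_of_mem_of_inner_eq_zero ?_ fun w hw => ?_
  · rw [Submodule.mem_orthogonal]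
    intro u hu
    obtain ⟨a, b, rfl⟩ := Submodule.mem_span_pair.mp hu
    simp only [inner_sub_right, inner_add_left, inner_smul_left, Real.ringHom_apply,
      real_inner_comm x V, hWx, mul_zero, add_zero, inner_smul_right, inner_self_eq_norm_sq_to_K,
      hV, one_pow, mul_one, hWV]
    ring
  · rw [sub_sub_cancel, real_inner_smul_left,
      Submodule.inner_right_of_mem_orthogonal (Submodule.subset_span (by simp)) hw, mul_zero]

lemma inner_ne_zero_of_not_linearIndependent {F : Type*} [NormedAddCommGroup F]
    [InnerProductSpace ℝ F] {V W x : F} (hVW : ⟪V, W⟫ = 0) (hW : W ≠ 0)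
    (hxV : ⟪x, V⟫ ^ 2 < ‖x‖ ^ 2 * ‖V‖ ^ 2) (hdep : ¬ LinearIndependent ℝ ![V, W, x]) :
    ⟪x, W⟫ ≠ 0 := by
  intro hxW
  apply hdep
  rw [Fintype.linearIndependent_iff]
  intro g hg
  simp only [Fin.sum_univ_three, Matrix.cons_val_zero, Matrix.cons_val_one,
    Matrix.cons_val_two, Matrix.head_cons, Matrix.tail_cons] at hg
  have hin (z : F) : g 0 * ⟪V, z⟫ + g 1 * ⟪W, z⟫ + g 2 * ⟪x, z⟫ = 0 := by
    simpa [inner_add_left, inner_smul_left] using congrArg (⟪·, z⟫) hg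
  have eW := hin W
  have eV := hin V
  have ex := hin x
  rw [hVW, hxW, real_inner_self_eq_norm_sq] at eW
  rw [real_inner_comm V W, hVW, real_inner_self_eq_norm_sq] at eV
  rw [real_inner_comm x W, hxW, real_inner_comm x V, real_inner_self_eq_norm_sq] at ex
  have hW2 : ‖W‖ ^ 2 ≠ 0 := by positivity
  have hD : ‖x‖ ^ 2 * ‖V‖ ^ 2 - ⟪x, V⟫ ^ 2 ≠ 0 := by linarith
  have h1 : g 1 = 0 := by simpa [hW2] using eW
  have h2 : g 2 = 0 := by
    have : g 2 * (‖x‖ ^ 2 * ‖V‖ ^ 2 - ⟪x, V⟫ ^ 2) = 0 := by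
      linear_combination ‖V‖ ^ 2 * ex - ⟪x, V⟫ * eV
    simpa [hD] using this
  have h0 : g 0 = 0 := by
    have : g 0 * (‖x‖ ^ 2 * ‖V‖ ^ 2 - ⟪x, V⟫ ^ 2) = 0 := by
      linear_combination ‖x‖ ^ 2 * eV - ⟪x, V⟫ * ex
    simpa [hD] using this
  intro i
  fin_cases i <;> assumption

lemma inner_sq_lt_one_of_ne {F : Type*} [NormedAddCommGroup F] [InnerProductSpace ℝ F]
    {x y : F} (hx : ‖x‖ = 1) (hy : ‖y‖ = 1) (hxy : y ≠ x) (hxy' : y ≠ -x) : ⟪x, y⟫ ^ 2 < 1 := by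
  have h1 := (inner_lt_one_iff_real_of_norm_eq_one hx hy).mpr hxy.symm
  have h2 := (inner_lt_one_iff_real_of_norm_eq_one hx ((norm_neg y).trans hy)).mpr
    fun h => hxy' (by rw [h, neg_neg])
  rw [inner_neg_right] at h2
  exact sq_lt_one_iff_abs_lt_one _ |>.mpr (abs_lt.mpr ⟨by linarith, h1⟩)

lemma HasDerivAt.inner_eq_zero_of_norm_eventually_eq {F : Type*} [NormedAddCommGroup F]
    [InnerProductSpace ℝ F] {γ : ℝ → F} {v : F} {t r : ℝ} (hγ : HasDerivAt γ v t)
    (hr : ∀ᶠ s in 𝓝 t, ‖γ s‖ = r) : ⟪γ t, v⟫ = 0 := by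
  have h0 : HasDerivAt (‖γ ·‖ ^ 2) 0 t :=
    (hasDerivAt_const t (r ^ 2)).congr_of_eventuallyEq (hr.mono fun s hs => by simp [hs])
  linarith [hγ.norm_sq.unique h0]

lemma IsPreconnected.forall_pos_or_forall_neg {X : Type*} [TopologicalSpace X] {s : Set X}
    {u : X → ℝ} (hs : IsPreconnected s) (hu : ContinuousOn u s) (h0 : ∀ t ∈ s, u t ≠ 0) :
    (∀ t ∈ s, 0 < u t) ∨ ∀ t ∈ s, u t < 0 := by
  by_contra! h
  obtain ⟨⟨a, ha, hua⟩, b, hb, hub⟩ := h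
  obtain ⟨c, hc, huc⟩ := hs.intermediate_value ha hb hu ⟨hua, hub⟩
  exact h0 c hc huc

lemma LipschitzOnWith.lt_of_ae_hasDerivAt_pos {f f' : ℝ → ℝ} {a b : ℝ} {C : ℝ≥0} (hab : a < b)
    (hf : LipschitzOnWith C f (Icc a b))
    (hderiv : ∀ᵐ t ∂volume.restrict (Ioo a b), HasDerivAt f (f' t) t ∧ 0 < f' t) :
    f a < f b := by
  have hac : AbsolutelyContinuousOnInterval f a b :=
    LipschitzOnWith.absolutelyContinuousOnInterval (by rwa [uIcc_of_le hab.le])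
  have hpos : ∀ᵐ t ∂volume.restrict (Ioc a b), 0 < deriv f t := by
    rw [← Measure.restrict_congr_set Ioo_ae_eq_Ioc]
    filter_upwards [hderiv] with t ht
    exact ht.1.deriv ▸ ht.2
  rw [← sub_pos, ← hac.integral_deriv_eq_sub,
    intervalIntegral.integral_pos_iff_support_of_nonneg_ae'
      (by rw [uIoc_of_le hab.le]; exact hpos.mono fun t ht => ht.le) hac.intervalIntegrable_deriv]
  refine ⟨hab, (show 0 < volume (Ioc a b) by simp [hab]).trans_le (measure_mono_ae ?_)⟩
  filter_upwards [(ae_restrict_iff' measurableSet_Ioc).mp hpos] with t ht hmem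
  exact ⟨(ht hmem).ne', hmem⟩

lemma LipschitzOnWith.ne_of_ae_hasDerivAt_eq_mul {f f' β u : ℝ → ℝ} {a b : ℝ} {C : ℝ≥0}
    (hab : a < b) (hf : LipschitzOnWith C f (Icc a b))
    (hderiv : ∀ᵐ t ∂volume.restrict (Ioo a b), HasDerivAt f (f' t) t ∧ f' t = β t * u t)
    (hβ : ∀ t ∈ Ioo a b, 0 < β t) (hu : ContinuousOn u (Ioo a b))
    (hu0 : ∀ t ∈ Ioo a b, u t ≠ 0) : f a ≠ f b := by
  have hderiv' := hderiv.and (ae_restrict_mem measurableSet_Ioo)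
  rcases isPreconnected_Ioo.forall_pos_or_forall_neg hu hu0 with hpos | hneg
  · refine (hf.lt_of_ae_hasDerivAt_pos hab (f' := f') ?_).ne
    filter_upwards [hderiv'] with t ⟨⟨hd, he⟩, ht⟩
    exact ⟨hd, he ▸ mul_pos (hβ t ht) (hpos t ht)⟩
  · refine fun h => (LipschitzWith.id.neg.comp_lipschitzOnWith hf |>.lt_of_ae_hasDerivAt_pos
      hab (f' := fun t => -f' t) ?_).ne (by simp [h])
    filter_upwards [hderiv'] with t ⟨⟨hd, he⟩, ht⟩
    exact ⟨hd.neg, he ▸ neg_pos.mpr (mul_neg_of_pos_of_neg (hβ t ht) (hneg t ht))⟩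

lemma BoundedVariationOn.integrableOn_Icc {β : ℝ → ℝ} {a b : ℝ}
    (hβ : BoundedVariationOn β (Icc a b)) : IntegrableOn β (Icc a b) := by
  obtain ⟨p, q, hp, hq, rfl⟩ := hβ.locallyBoundedVariationOn.exists_monotoneOn_sub_monotoneOn
  exact (hp.integrableOn_isCompact isCompact_Icc).sub (hq.integrableOn_isCompact isCompact_Icc)

lemma BoundedVariationOn.setIntegral_Ioo_mul_pos {β g : ℝ → ℝ} {a b x : ℝ}
    (hβ : BoundedVariationOn β (Icc a b)) (hβpos : ∀ t ∈ Icc a b, 0 < β t)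
    (hg : ContinuousOn g (Icc a b)) (hg0 : ∀ t ∈ Icc a b, 0 ≤ g t) (hx : x ∈ Ioo a b)
    (hgx : 0 < g x) : 0 < ∫ t in Ioo a b, β t * g t := by
  have hint : IntegrableOn (fun t => β t * g t) (Ioo a b) :=
    (hβ.integrableOn_Icc.mul_continuousOn hg isCompact_Icc).mono_set Ioo_subset_Icc_self
  rw [setIntegral_pos_iff_support_of_nonneg_ae ?_ hint]
  · have hU : IsOpen (Ioo a b ∩ g ⁻¹' Ioi 0) :=
      (hg.mono Ioo_subset_Icc_self).isOpen_inter_preimage isOpen_Ioo isOpen_Ioi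
    refine (hU.measure_pos volume ⟨x, hx, hgx⟩).trans_le (measure_mono ?_)
    rintro t ⟨ht, hgt⟩
    exact ⟨(mul_pos (hβpos t (Ioo_subset_Icc_self ht)) hgt).ne', ht⟩
  · filter_upwards [ae_restrict_mem measurableSet_Ioo] with t ht
    exact mul_nonneg (hβpos t (Ioo_subset_Icc_self ht)).le (hg0 t (Ioo_subset_Icc_self ht))

lemma ContinuousOn.exists_Ioo_ne_zero_of_eq_zero {f : ℝ → ℝ} {p q x : ℝ}
    (hf : ContinuousOn f (Icc p q)) (hfp : f p = 0) (hfq : f q = 0) (hx : x ∈ Icc p q)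
    (hfx : f x ≠ 0) : ∃ α γ, p ≤ α ∧ α < γ ∧ γ ≤ q ∧ f α = 0 ∧ f γ = 0 ∧
      ∀ t ∈ Ioo α γ, f t ≠ 0 := by
  set A := Icc p x ∩ f ⁻¹' {0}
  set B := Icc x q ∩ f ⁻¹' {0}
  have hA : sSup A ∈ A := IsClosed.csSup_mem
    ((hf.mono (Icc_subset_Icc_right hx.2)).preimage_isClosed_of_isClosed isClosed_Icc
      isClosed_singleton) ⟨p, ⟨le_rfl, hx.1⟩, hfp⟩ ⟨x, fun t ht => ht.1.2⟩
  have hB : sInf B ∈ B := IsClosed.csInf_mem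
    ((hf.mono (Icc_subset_Icc_left hx.1)).preimage_isClosed_of_isClosed isClosed_Icc
      isClosed_singleton) ⟨q, ⟨hx.2, le_rfl⟩, hfq⟩ ⟨x, fun t ht => ht.1.1⟩
  have hAx : sSup A < x := hA.1.2.lt_of_ne fun h => hfx (h ▸ hA.2)
  have hxB : x < sInf B := hB.1.1.lt_of_ne fun h => hfx (h ▸ hB.2)
  refine ⟨sSup A, sInf B, hA.1.1, hAx.trans hxB, hB.1.2, hA.2, hB.2, fun t ht hft => ?_⟩
  rcases le_or_gt t x with htx | hxt
  · exact ht.1.not_ge (le_csSup ⟨x, fun s hs => hs.1.2⟩ ⟨⟨hA.1.1.trans ht.1.le, htx⟩, hft⟩)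
  · exact ht.2.not_ge (csInf_le ⟨x, fun s hs => hs.1.1⟩ ⟨⟨hxt.le, ht.2.le.trans hB.1.2⟩, hft⟩)

section StructureSetting

variable {n : ℕ} {L k : ℝ} {β : ℝ → ℝ} {lam : E n} {τ τ' : ℝ → E n} {f f' : ℝ → ℝ}

lemma not_forall_eq_zero_on_Ioo {p q : ℝ} (hpq : p < q) (hsub : Ioo p q ⊆ Ioo 0 L)
    (hβpos : ∀ t ∈ Icc (0:ℝ) L, 0 < β t) (hβBV : BoundedVariationOn β (Icc 0 L))
    (hτ : IsW1InftySphere n L τ τ') (hk : k ≠ 0) (hlam : ‖lam‖ = 1) (hf : IsW1InftyR L f f')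
    (heq1 : WeakFEq1 n L k β lam τ τ' f f') (heq2 : WeakFEq2 n L β lam τ' f')
    (hlt : ∀ t ∈ Ioo p q, ⟪lam, τ t⟫ ^ 2 < 1) : ¬ ∀ t ∈ Ioo p q, f t = 0 := by
  intro hfz
  obtain ⟨⟨Cτ, hτLip⟩, hτd, hτnorm⟩ := hτ
  have hmid : (p + q) / 2 ∈ Ioo p q := ⟨by linarith, by linarith⟩
  obtain ⟨φ, hφsupp, -, hφ, hφrange, hφmid⟩ :=
    exists_contDiff_tsupport_subset (n := ⊤) (isOpen_Ioo.mem_nhds hmid)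
  have hφ0 : ∀ t ∉ Ioo p q, φ t = 0 ∧ deriv φ t = 0 := fun t ht =>
    ⟨image_eq_zero_of_notMem_tsupport (ht <| hφsupp ·),
      Function.notMem_support.mp (ht <| hφsupp <| support_deriv_subset ·)⟩
  -- On `(p, q)` both `f` and `f'` vanish, so only the projection term survives.
  have hintegrand : ∀ᵐ t ∂volume.restrict (Ioo 0 L),
      f t * ⟪τ' t, deriv (fun s => φ s • lam) t⟫ + f' t * ⟪τ' t, φ t • lam⟫
        - f t * k ^ 2 * ⟪τ t, φ t • lam⟫
        + β t * k ^ 2 * ⟪projPerp (τ t) (τ' t) lam, φ t • lam⟫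
      = β t * (k ^ 2 * φ t * (1 - ⟪lam, τ t⟫ ^ 2)) := by
    filter_upwards [hτd, hf.2, heq2, ae_restrict_mem measurableSet_Ioo] with t hτt hft hf't ht
    rw [deriv_smul_const ((hφ.differentiable (by simp)) t)]
    by_cases htpq : t ∈ Ioo p q
    · have hf0 : f t = 0 := hfz t htpq
      have hf'0 : f' t = 0 := hft.unique <| (hasDerivAt_const t 0).congr_of_eventuallyEq <|
        eventually_of_mem (isOpen_Ioo.mem_nhds htpq) hfz
      have hu : ⟪lam, τ' t⟫ = 0 := by
        rw [hf'0, eq_comm, mul_eq_zero] at hf't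
        exact hf't.resolve_left (hβpos t (Ioo_subset_Icc_self ht)).ne'
      have horth : ⟪τ t, τ' t⟫ = 0 := hτt.inner_eq_zero_of_norm_eventually_eq <|
        eventually_of_mem (isOpen_Ioo.mem_nhds ht) fun s hs => hτnorm s (Ioo_subset_Icc_self hs)
      rw [projPerp_eq_sub_inner_smul (hτnorm t (Ioo_subset_Icc_self ht)) horth hu]
      simp only [hf0, hf'0, zero_mul, zero_add, add_zero, sub_self, inner_sub_left,
        inner_smul_left, inner_smul_right, real_inner_comm lam (τ t), inner_self_eq_norm_sq_to_K,
        hlam, Real.ringHom_apply, one_pow]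
      ring
    · simp [(hφ0 t htpq).1, (hφ0 t htpq).2]
  have hpos : 0 < ∫ t in Ioo 0 L, β t * (k ^ 2 * φ t * (1 - ⟪lam, τ t⟫ ^ 2)) := by
    refine hβBV.setIntegral_Ioo_mul_pos hβpos ?_ (fun t ht => ?_) (hsub hmid) ?_
    · exact ((continuousOn_const.mul hφ.continuous.continuousOn).mul
        (continuousOn_const.sub ((continuousOn_const.inner hτLip.continuousOn).pow 2)))
    · have hcs := abs_real_inner_le_norm lam (τ t)
      rw [hlam, hτnorm t ht, one_mul] at hcs
      have hφt := hφrange (mem_range_self t)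
      exact mul_nonneg (mul_nonneg (sq_nonneg k) hφt.1)
        (sub_nonneg.mpr ((sq_le_one_iff_abs_le_one _).mpr hcs))
    · rw [hφmid, mul_one]
      exact mul_pos (by positivity) (sub_pos.mpr (hlt _ hmid))
  have hzero := heq1 (fun s => φ s • lam) (hφ.smul contDiff_const)
    ((tsupport_smul_subset_left _ _).trans (hφsupp.trans hsub))
  rw [integral_congr_ae hintegrand] at hzero
  exact hpos.ne' hzero

lemma exists_one_le_inner_sq_of_eq_zero {p q : ℝ} (hpq : p ≠ q) (hsub : uIcc p q ⊆ Icc 0 L)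
    (hβpos : ∀ t ∈ Icc (0:ℝ) L, 0 < β t) (hβBV : BoundedVariationOn β (Icc 0 L))
    (hτ : IsW1InftySphere n L τ τ') (hkpos : 0 < k) (hlam : ‖lam‖ = 1)
    (hf : IsW1InftyR L f f') (hfnn : ∀ t ∈ Icc (0:ℝ) L, 0 ≤ f t)
    (heq1 : WeakFEq1 n L k β lam τ τ' f f') (heq2 : WeakFEq2 n L β lam τ' f')
    {Ω : Set ℝ} (hΩ : Ω = {t ∈ Icc (0:ℝ) L | 0 < f t})
    (hτd : ∀ t ∈ Ω, HasDerivWithinAt τ (τ' t) (Icc 0 L) t)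
    (hτ'cont : ContinuousOn τ' Ω) (hτ'k : ∀ t ∈ Ω, ‖τ' t‖ = k)
    (hdep : ∀ t ∈ Ω, ¬ LinearIndependent ℝ ![τ t, τ' t, lam])
    (hfp : f p = 0) (hfq : f q = 0) : ∃ t ∈ uIcc p q, 1 ≤ ⟪lam, τ t⟫ ^ 2 := by
  wlog hlt : p < q generalizing p q
  · rw [uIcc_comm] at hsub ⊢
    exact this hpq.symm hsub hfq hfp (lt_of_le_of_ne (not_lt.mp hlt) hpq.symm)
  rw [uIcc_of_lt hlt] at hsub ⊢
  by_contra! hsq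
  obtain ⟨C, hfLip⟩ := hf.1
  have hIoo : Ioo p q ⊆ Ioo 0 L :=
    Ioo_subset_Ioo (hsub (left_mem_Icc.mpr hlt.le)).1 (hsub (right_mem_Icc.mpr hlt.le)).2
  obtain ⟨x, hx, hfx⟩ : ∃ x ∈ Ioo p q, f x ≠ 0 := by
    by_contra! h
    exact not_forall_eq_zero_on_Ioo hlt hIoo hβpos hβBV hτ hkpos.ne' hlam hf heq1 heq2
      (fun t ht => hsq t (Ioo_subset_Icc_self ht)) h
  obtain ⟨α, γ, hpα, hαγ, hγq, hfα, hfγ, hne⟩ :=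
    (hfLip.continuousOn.mono hsub).exists_Ioo_ne_zero_of_eq_zero hfp hfq
      (Ioo_subset_Icc_self hx) hfx
  have hαγsub : Icc α γ ⊆ Icc p q := Icc_subset_Icc hpα hγq
  have hΩαγ : Ioo α γ ⊆ Ω := fun t ht => by
    have htI := hsub (hαγsub (Ioo_subset_Icc_self ht))
    exact hΩ ▸ ⟨htI, (hfnn t htI).lt_of_ne (hne t ht).symm⟩
  refine (hfLip.mono (hαγsub.trans hsub)).ne_of_ae_hasDerivAt_eq_mul (f' := f')
    (u := fun t => ⟪lam, τ' t⟫) hαγ ?_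
    (fun t ht => hβpos t (hsub (hαγsub (Ioo_subset_Icc_self ht))))
    ((continuousOn_const.inner hτ'cont).mono hΩαγ) (fun t ht => ?_) (hfα.trans hfγ.symm)
  · have hαγIoo : Ioo α γ ⊆ Ioo 0 L := (Ioo_subset_Ioo hpα hγq).trans hIoo
    filter_upwards [ae_restrict_of_ae_restrict_of_subset hαγIoo hf.2,
      ae_restrict_of_ae_restrict_of_subset hαγIoo heq2] with t hd he
    exact ⟨hd, he⟩
  · have htΩ := hΩαγ ht
    have htI : t ∈ Ioo 0 L := hIoo (Ioo_subset_Ioo hpα hγq ht)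
    have hnorm := hτ.2.2 t (Ioo_subset_Icc_self htI)
    refine inner_ne_zero_of_not_linearIndependent ?_ ?_ ?_ (hdep t htΩ)
    · have hnhds := Icc_mem_nhds htI.1 htI.2
      exact ((hτd t htΩ).hasDerivAt hnhds).inner_eq_zero_of_norm_eventually_eq
        (eventually_of_mem hnhds hτ.2.2)
    · rw [← norm_ne_zero_iff, hτ'k t htΩ]
      exact hkpos.ne'
    · rw [hlam, hnorm, one_pow, one_mul]
      exact hsq t (hαγsub (Ioo_subset_Icc_self ht))

end StructureSetting

theorem exceptional_set_discrete_general
    (n : ℕ) (L : ℝ)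
    (β : ℝ → ℝ) (hβpos : ∀ t ∈ Icc (0:ℝ) L, 0 < β t)
    (hβBV : BoundedVariationOn β (Icc 0 L))
    (τ τ' : ℝ → E n) (hτ : IsW1InftySphere n L τ τ')
    (k : ℝ) (hkpos : 0 < k)
    (lam : E n) (hlam : ‖lam‖ = 1)
    (f f' : ℝ → ℝ) (hf : IsW1InftyR L f f')
    (hfnn : ∀ t ∈ Icc (0:ℝ) L, 0 ≤ f t)
    (heq1 : WeakFEq1 n L k β lam τ τ' f f')
    (heq2 : WeakFEq2 n L β lam τ' f')
    (Ω : Set ℝ) (hΩ : Ω = {t ∈ Icc (0:ℝ) L | 0 < f t})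
    (hτd : ∀ t ∈ Ω, HasDerivWithinAt τ (τ' t) (Icc 0 L) t)
    (hτ'cont : ContinuousOn τ' Ω)
    (hτ'k : ∀ t ∈ Ω, ‖τ' t‖ = k)
    (hdep : ∀ t ∈ Ω, ¬ LinearIndependent ℝ ![τ t, τ' t, lam])
    (Ω' : Set ℝ)
    (hΩ' : Ω' = {t ∈ Icc (0:ℝ) L | τ t ≠ lam ∧ τ t ≠ -lam} ∪ Ω) :
    ∀ t ∈ Ω' \ Ω, ∃ ε : ℝ, 0 < ε ∧
      ∀ s ∈ Ω' \ Ω, |s - t| < ε → s = t := by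
  have hexc : ∀ t ∈ Ω' \ Ω, t ∈ Icc 0 L ∧ f t = 0 ∧ ⟪lam, τ t⟫ ^ 2 < 1 := by
    rintro t ⟨ht', htΩ⟩
    obtain ⟨htI, hne, hne'⟩ := (hΩ' ▸ ht').resolve_right htΩ
    refine ⟨htI, (hfnn t htI).antisymm' (not_lt.mp fun h => htΩ (hΩ ▸ ⟨htI, h⟩)), ?_⟩
    exact inner_sq_lt_one_of_ne hlam (hτ.2.2 t htI) hne hne'
  intro t₀ ht₀
  obtain ⟨ht₀I, hft₀, hsq₀⟩ := hexc t₀ ht₀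
  obtain ⟨C, hτLip⟩ := hτ.1
  have hnear : ∀ᶠ t in 𝓝[Icc 0 L] t₀, ⟪lam, τ t⟫ ^ 2 < 1 :=
    ((continuousOn_const.inner hτLip.continuousOn).pow 2 t₀ ht₀I).eventually (gt_mem_nhds hsq₀)
  obtain ⟨ε, hε, hball⟩ := Metric.eventually_nhds_iff.mp (eventually_nhdsWithin_iff.mp hnear)
  refine ⟨ε, hε, fun s hs hst => by_contra fun hne => ?_⟩
  obtain ⟨hsI, hfs, -⟩ := hexc s hs
  obtain ⟨t, ht, hge⟩ := exists_one_le_inner_sq_of_eq_zero (Ne.symm hne) (uIcc_subset_Icc ht₀I hsI)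
    hβpos hβBV hτ hkpos hlam hf hfnn heq1 heq2 hΩ hτd hτ'cont hτ'k hdep hft₀ hfs
  refine hge.not_gt (hball ?_ (uIcc_subset_Icc ht₀I hsI ht))
  rw [Real.dist_eq]
  exact (abs_sub_left_of_mem_uIcc ht).trans_lt hst

/-- **Lemma (discreteness of `Ω' \ Ω`).**
In the structure setting, with `Ω' = {t ∈ [0,L] : τ(t) ≠ ±λ} ∪ Ω`, the set
`Ω' \ Ω` is discrete: each of its points is isolated in it. -/
theorem exceptional_set_discrete
    (n : ℕ) (hn : 2 ≤ n) (L : ℝ) (hL : 0 < L)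
    (β : ℝ → ℝ) (hβpos : ∀ t ∈ Icc (0:ℝ) L, 0 < β t)
    (hβBV : BoundedVariationOn β (Icc 0 L))
    (hβinv : ∃ c : ℝ, 0 < c ∧ ∀ t ∈ Icc (0:ℝ) L, c ≤ β t)
    (τ τ' : ℝ → E n) (hτ : IsW1InftySphere n L τ τ')
    (k : ℝ) (hk : k = Kinf n L τ') (hkpos : 0 < k)
    (lam : E n) (hlam : ‖lam‖ = 1)
    (f f' : ℝ → ℝ) (hf : IsW1InftyR L f f')
    (hf0 : ¬ ∀ t ∈ Icc (0:ℝ) L, f t = 0)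
    (hfnn : ∀ t ∈ Icc (0:ℝ) L, 0 ≤ f t)
    (heq1 : WeakFEq1 n L k β lam τ τ' f f')
    (heq2 : WeakFEq2 n L β lam τ' f')
    (Ω : Set ℝ) (hΩ : Ω = {t ∈ Icc (0:ℝ) L | 0 < f t})
    (hτd : ∀ t ∈ Ω, HasDerivWithinAt τ (τ' t) (Icc 0 L) t)
    (hτ'cont : ContinuousOn τ' Ω)
    (hτ'k : ∀ t ∈ Ω, ‖τ' t‖ = k)
    (hdep : ∀ t ∈ Ω, ¬ LinearIndependent ℝ ![τ t, τ' t, lam])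
    (Ω' : Set ℝ)
    (hΩ' : Ω' = {t ∈ Icc (0:ℝ) L | τ t ≠ lam ∧ τ t ≠ -lam} ∪ Ω) :
    ∀ t ∈ Ω' \ Ω, ∃ ε : ℝ, 0 < ε ∧
      ∀ s ∈ Ω' \ Ω, |s - t| < ε → s = t :=
  exceptional_set_discrete_general n L β hβpos hβBV τ τ' hτ k hkpos lam hlam f f' hf hfnn heq1 heq2
    Ω hΩ hτd hτ'cont hτ'k hdep Ω' hΩ'
end
end
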